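/- arXiv:1210.1078 — 5 statements merged into one kernel-verified Lean document; each statement's English description precedes it below -/
import Mathlib

section
/- If m = 2^v d and n = 2d' where d and d' are odd and v ≥ 2, then there is no 1-factorization of the complete multipartite graph K_{m×n} admitting a cyclic group of automorphisms acting sharply transitively on the vertex set. -/
open SimpleGraph

/-- The complete multipartite graph `K_{m×n}` with `m` parts each of size `n`:
two vertices are adjacent iff they lie in different parts. -/
def completeMultipartite (m n : ℕ) : SimpleGraph (Fin m × Fin n) where
  Adj u v := u.1 ≠ v.1
  symm := ⟨fun _ _ h => Ne.symm h⟩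
  loopless := ⟨fun _ h => h rfl⟩

/-- `M` is a 1-factor (perfect matching) of `Γ`: a set of edges of `Γ` such that
every vertex lies in exactly one edge of `M`. -/
def IsOneFactor {V : Type*} (Γ : SimpleGraph V) (M : Set (Sym2 V)) : Prop :=
  M ⊆ Γ.edgeSet ∧ ∀ v : V, ∃! e : Sym2 V, e ∈ M ∧ v ∈ e

/-- `F` is a 1-factorization of `Γ`: a collection of 1-factors such that every
edge of `Γ` lies in exactly one member of `F`. -/
def IsOneFactorization {V : Type*} (Γ : SimpleGraph V) (F : Set (Set (Sym2 V))) : Prop :=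
  (∀ M ∈ F, IsOneFactor Γ M) ∧ ∀ e ∈ Γ.edgeSet, ∃! M : Set (Sym2 V), M ∈ F ∧ e ∈ M

/-- The 1-factorization `F` of `Γ` admits the group `A`, acting on the vertices via `φ`,
as a group of automorphisms mapping factors to factors and acting sharply transitively
on the vertices. -/
def IsSharplyTransitiveOneFactorization {V : Type*} (Γ : SimpleGraph V)
    (A : Type*) [Group A] (φ : A →* Equiv.Perm V) (F : Set (Set (Sym2 V))) : Prop :=
  IsOneFactorization Γ F ∧
  (∀ a : A, ∀ u v : V, Γ.Adj (φ a u) (φ a v) ↔ Γ.Adj u v) ∧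
  (∀ a : A, ∀ M ∈ F, Sym2.map (φ a) '' M ∈ F) ∧
  (∀ u v : V, ∃! a : A, φ a u = v)

/-- `Γ` admits a 1-factorization with `A` as an automorphism group acting sharply
transitively on the vertex set. -/
def HasRegularOneFactorization {V : Type*} (Γ : SimpleGraph V) (A : Type*) [Group A] : Prop :=
  ∃ (φ : A →* Equiv.Perm V) (F : Set (Set (Sym2 V))),
    IsSharplyTransitiveOneFactorization Γ A φ F

/-!
Identify the vertices with `G = ZMod N`, `N = m n`, through the regular action. The part of `0`
is a subgroup `H` of order `n`, and two vertices are adjacent iff their difference is outside `H`.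
A factor `M` becomes a fixed-point-free involution `ρ_M` of `G` with `ρ_M x - x ∉ H`.

Count the pairs `(M, x)` for which `ρ_M x` and `x` have the same parity. Every edge lies in exactly
one factor, so there are `N c` of them, where `c` is the number of even elements outside `H`. On
the other hand, `ρ_M` commutes with the translations by the stabilizer `S` of `M`. It induces a
fixed-point-free involution of `G ⧸ S`, so `S` has even index and contains only even elements.
Parity is then defined on `G ⧸ S`, and there the parity-preserving cosets come in two equinumerous
families of even size. So `M` has `4 k |S|` parity-preserving points, for some `k`, and its orbit
contributes `4 k N`. Hence `4 ∣ c = N / 2 - n`, i.e. `m n ≡ 2 n [MOD 8]`, which fails for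
`m = 2^v d` with `v ≥ 2` and `n = 2 d'` with `d'` odd.
-/

open Finset Function AddAction
open scoped Pointwise

theorem Finset.even_card_of_involution {α : Type*} {s : Finset α} (f : α → α)
    (hf_mem : ∀ a ∈ s, f a ∈ s) (hf : ∀ a ∈ s, f (f a) = a) (hne : ∀ a ∈ s, f a ≠ a) :
    Even #s := by
  rw [← ZMod.natCast_eq_zero_iff_even, card_eq_sum_ones, Nat.cast_sum, Nat.cast_one]
  exact sum_involution (fun a _ => f a) (fun _ _ => by decide) (fun a ha _ => hne a ha)
    hf_mem hf

theorem Finite.even_card_of_involutive {α : Type*} [Finite α] {f : α → α} (hf : Involutive f)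
    (hne : ∀ a, f a ≠ a) : Even (Nat.card α) := by
  have := Fintype.ofFinite α
  rw [Nat.card_eq_fintype_card, ← card_univ]
  exact even_card_of_involution f (fun a _ => mem_univ _) (fun a _ => hf a) (fun a _ => hne a)

/-- The classes `P ∧ P ∘ μ` and `¬P ∧ ¬P ∘ μ` are `μ`-stable, hence even, and they have the same
size because `μ` exchanges the two mixed classes. -/
theorem four_dvd_card_filter_iff_of_involutive {Q : Type*} [Fintype Q] {μ : Q → Q}
    (hμ : Involutive μ) (hne : ∀ q, μ q ≠ q) (P : Q → Prop) [DecidablePred P]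
    (hP : #{q | P q} = #{q | ¬P q}) : 4 ∣ #{q | P (μ q) ↔ P q} := by
  classical
  have even_of_invariant : ∀ R : Q → Prop, [DecidablePred R] → (∀ q, R q → R (μ q)) →
      Even #{q | R q} := fun R _ hR =>
    even_card_of_involution μ (fun q hq => by simp_all) (fun q _ => hμ q) (fun q _ => hne q)
  obtain ⟨a, ha⟩ :=
    even_of_invariant (fun q => P q ∧ P (μ q)) (fun q h => by simp [hμ q, h.1, h.2])
  obtain ⟨b, hb⟩ :=
    even_of_invariant (fun q => ¬P q ∧ ¬P (μ q)) (fun q h => by simp [hμ q, h.1, h.2])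
  have hswap : #{q | P q ∧ ¬P (μ q)} = #{q | ¬P q ∧ P (μ q)} :=
    card_bij' (fun q _ => μ q) (fun q _ => μ q) (by simp [hμ _, and_comm])
      (by simp [hμ _, and_comm]) (by simp [hμ _]) (by simp [hμ _])
  have hP_split := card_filter_add_card_filter_not (s := ({q | P q} : Finset Q)) (P ∘ μ)
  have hnP_split := card_filter_add_card_filter_not (s := ({q | ¬P q} : Finset Q)) (P ∘ μ)
  simp only [filter_filter, comp_apply] at hP_split hnP_split
  have htarget : #{q | P (μ q) ↔ P q} = #{q | P q ∧ P (μ q)} + #{q | ¬P q ∧ ¬P (μ q)} := by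
    rw [← card_union_of_disjoint (disjoint_filter.mpr fun _ _ h h' => h'.1 h.1)]
    congr 1
    ext q
    simp only [mem_filter, mem_univ, true_and, mem_union]
    tauto
  exact ⟨a, by omega⟩

theorem AddMonoidHom.card_filter_eq_zero_eq_card_filter_ne_zero {G : Type*} [AddGroup G]
    [Fintype G] {χ : G →+ ZMod 2} (hχ : Surjective χ) :
    #{x | χ x = 0} = #{x | χ x ≠ 0} := by
  obtain ⟨a, ha⟩ := hχ 1
  have hZ2 : ∀ b : ZMod 2, (b + 1 = 0 ↔ b ≠ 0) ∧ (b - 1 = 0 ↔ b ≠ 0) := by decide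
  exact card_bij' (fun x _ => x + a) (fun x _ => x - a) (by simp [ha, hZ2])
    (by simp [ha, hZ2]) (by simp) (by simp)

theorem QuotientAddGroup.exists_involutive_map {G : Type*} [AddGroup G] {S : AddSubgroup G}
    {ρ : G → G} (hρ : Involutive ρ) (hρS : ∀ x, ∀ t ∈ S, ρ (x + t) = ρ x + t)
    (hfree : ∀ x, -x + ρ x ∉ S) :
    ∃ μ : G ⧸ S → G ⧸ S, (∀ x : G, μ x = ρ x) ∧ Involutive μ ∧ ∀ q, μ q ≠ q := by
  have hwd : ∀ x y, -x + y ∈ S → -ρ x + ρ y ∈ S := by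
    intro x y h
    rwa [← add_neg_cancel_left x y, hρS x _ h, neg_add_cancel_left]
  let μ : G ⧸ S → G ⧸ S := Quotient.map' ρ fun x y h => by
    rw [QuotientAddGroup.leftRel_apply] at h ⊢
    exact hwd x y h
  refine ⟨μ, fun x => rfl, fun q => ?_, fun q => ?_⟩
  · induction q using QuotientAddGroup.induction_on with
    | H x => exact congrArg _ (hρ x)
  · induction q using QuotientAddGroup.induction_on with
    | H x => exact fun h => hfree x (QuotientAddGroup.eq.mp h.symm)

theorem four_mul_card_dvd_card_filter_eq {G : Type*} [AddCommGroup G] [Fintype G]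
    {S : AddSubgroup G} {ρ : G → G} (hρ : Involutive ρ)
    (hρS : ∀ x, ∀ t ∈ S, ρ (x + t) = ρ x + t) (hfree : ∀ x, ρ x - x ∉ S) {χ : G →+ ZMod 2}
    (hχ : Surjective χ) (hSχ : S ≤ χ.ker) :
    4 * Nat.card S ∣ #{x | χ (ρ x) = χ x} := by
  classical
  obtain ⟨μ, hμρ, hμ, hne⟩ := QuotientAddGroup.exists_involutive_map hρ hρS
    (by simpa [neg_add_eq_sub] using hfree)
  let χ' : G ⧸ S →+ ZMod 2 := QuotientAddGroup.lift S χ hSχ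
  have hχ' : ∀ x : G, χ' x = χ x := fun x => rfl
  have : Fintype (G ⧸ S) := Fintype.ofFinite _
  have h4 := four_dvd_card_filter_iff_of_involutive hμ hne (fun q => χ' q = 0)
    (AddMonoidHom.card_filter_eq_zero_eq_card_filter_ne_zero
      (QuotientAddGroup.lift_surjective_of_surjective _ _ hχ _))
  have hpreimage :
      {x | χ (ρ x) = χ x} = QuotientAddGroup.mk ⁻¹' {q | χ' (μ q) = 0 ↔ χ' q = 0} := by
    ext x
    simp only [Set.mem_ofPred_eq, Set.mem_preimage, hμρ, hχ']
    generalize χ (ρ x) = a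
    generalize χ x = b
    revert a b
    decide
  have hcard := Nat.card_congr (QuotientAddGroup.preimageMkEquivAddSubgroupProdSet S
    {q | χ' (μ q) = 0 ↔ χ' q = 0})
  rw [← hpreimage, Nat.card_prod] at hcard
  simp only [Nat.card_eq_card_toFinset, Set.toFinset_ofPred] at hcard
  rw [hcard, mul_comm 4]
  exact mul_dvd_mul_left _ h4

theorem AddAction.mul_card_dvd_sum_of_mul_card_stabilizer_dvd {G α : Type*} [AddGroup G]
    [AddAction G α] {s : Finset α} (hs : ∀ g : G, ∀ a ∈ s, g +ᵥ a ∈ s) {f : α → ℕ}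
    (hf : ∀ g : G, ∀ a ∈ s, f (g +ᵥ a) = f a) {m : ℕ}
    (h : ∀ a ∈ s, m * Nat.card (stabilizer G a) ∣ f a) : m * Nat.card G ∣ ∑ a ∈ s, f a := by
  classical
  rw [sum_partition (orbitRel G α)]
  refine dvd_sum fun o ho => ?_
  obtain ⟨a, ha, rfl⟩ := mem_image.mp ho
  have hfiber : ∀ y, y ∈ s ∧ (⟦y⟧ : Quotient (orbitRel G α)) = ⟦a⟧ ↔ y ∈ orbit G a := by
    intro y
    rw [Quotient.eq, orbitRel_apply]
    refine ⟨And.right, fun hy => ⟨?_, hy⟩⟩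
    obtain ⟨g, rfl⟩ := hy
    exact hs g a ha
  have hconst : ∀ y ∈ s.filter (fun y => ⟦y⟧ = (⟦a⟧ : Quotient (orbitRel G α))), f y = f a := by
    intro y hy
    obtain ⟨g, rfl⟩ := (hfiber y).mp (mem_filter.mp hy)
    exact hf g a ha
  have hcard : #(s.filter fun y => ⟦y⟧ = (⟦a⟧ : Quotient (orbitRel G α)))
      = (stabilizer G a).index := by
    rw [index_stabilizer, ← Set.ncard_coe_finset]
    congr 1
    ext y
    simpa using hfiber y
  obtain ⟨k, hk⟩ := h a ha
  rw [sum_const_nat hconst, hcard, hk, ← (stabilizer G a).index_mul_card]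
  exact ⟨k, by ring⟩

namespace ZMod
variable {N : ℕ}

def parity (h2 : 2 ∣ N) : ZMod N →+ ZMod 2 := (castHom h2 (ZMod 2)).toAddMonoidHom

theorem parity_surjective (h2 : 2 ∣ N) : Surjective (parity h2) := castHom_surjective h2

variable [NeZero N]

theorem index_dvd_val_of_mem {S : AddSubgroup (ZMod N)} {x : ZMod N} (hx : x ∈ S) :
    S.index ∣ x.val := by
  have hzero : ((Nat.card S * x.val : ℕ) : ZMod N) = 0 := by
    rw [Nat.cast_mul, natCast_zmod_val, ← nsmul_eq_mul]
    exact congrArg Subtype.val (card_nsmul_eq_zero' (x := (⟨x, hx⟩ : S)))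
  obtain ⟨c, hc⟩ := (natCast_eq_zero_iff _ _).mp hzero
  have hN : N * c = S.index * Nat.card S * c := by rw [S.index_mul_card, Nat.card_zmod]
  exact ⟨c, Nat.eq_of_mul_eq_mul_left Nat.card_pos (by linarith)⟩

theorem le_ker_parity_of_even_index (h2 : 2 ∣ N) {S : AddSubgroup (ZMod N)}
    (hS : Even S.index) : S ≤ (parity h2).ker := fun x hx => by
  rw [AddMonoidHom.mem_ker, parity, RingHom.toAddMonoidHom_eq_coe, AddMonoidHom.coe_coe,
    castHom_apply, cast_eq_val, natCast_eq_zero_iff]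
  exact (even_iff_two_dvd.mp hS).trans (index_dvd_val_of_mem hx)

theorem val_add_val_of_add_self_eq_zero {x : ZMod N} (hx : x + x = 0) (hx0 : x ≠ 0) :
    x.val + x.val = N := by
  obtain ⟨c, hc⟩ : N ∣ x.val + x.val := by
    rw [← natCast_eq_zero_iff, Nat.cast_add, natCast_zmod_val, hx]
  have hpos : 0 < x.val := Nat.pos_of_ne_zero ((val_ne_zero x).mpr hx0)
  have := x.val_lt
  rcases c with _ | _ | c
  · omega
  · omega
  · nlinarith

theorem mem_of_add_self_eq_zero {H : AddSubgroup (ZMod N)} (hH : Even (Nat.card H))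
    {x : ZMod N} (hx : x + x = 0) : x ∈ H := by
  obtain rfl | hx0 := eq_or_ne x 0
  · exact H.zero_mem
  have : Fact (Nat.Prime 2) := ⟨Nat.prime_two⟩
  obtain ⟨a, ha⟩ := exists_prime_addOrderOf_dvd_card' 2 (even_iff_two_dvd.mp hH)
  have ha2 := addOrderOf_nsmul_eq_zero (a : ZMod N)
  rw [AddSubgroup.addOrderOf_coe, ha, two_nsmul] at ha2
  have ha0 : (a : ZMod N) ≠ 0 := fun h => by
    rw [← AddSubgroup.addOrderOf_coe, h, addOrderOf_zero] at ha
    exact absurd ha (by norm_num)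
  have hval := val_add_val_of_add_self_eq_zero ha2 ha0
  have hxval := val_add_val_of_add_self_eq_zero hx hx0
  rw [← val_injective N (by omega : (a : ZMod N).val = x.val)]
  exact a.2

theorem four_mul_card_dvd_card_parity_eq (h2 : 2 ∣ N) {S H : AddSubgroup (ZMod N)}
    (hH : Even (Nat.card H)) {ρ : ZMod N → ZMod N} (hρ : Involutive ρ)
    (hρS : ∀ x, ∀ t ∈ S, ρ (x + t) = ρ x + t) (hρH : ∀ x, ρ x - x ∉ H) :
    4 * Nat.card S ∣ #{x | parity h2 (ρ x) = parity h2 x} := by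
  have hfree : ∀ x, ρ x - x ∉ S := by
    intro x ht
    have hshift := hρS x _ ht
    rw [add_sub_cancel, hρ x] at hshift
    exact hρH x (mem_of_add_self_eq_zero hH (by linear_combination -hshift))
  obtain ⟨μ, -, hμ, hne⟩ := QuotientAddGroup.exists_involutive_map hρ hρS
    (by simpa [neg_add_eq_sub] using hfree)
  exact four_mul_card_dvd_card_filter_eq hρ hρS hfree (parity_surjective h2)
    (le_ker_parity_of_even_index h2 (Finite.even_card_of_involutive hμ hne))

theorem two_mul_card_parity_eq_zero_not_mem_add_card (h2 : 2 ∣ N) {H : AddSubgroup (ZMod N)}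
    [DecidablePred (· ∈ H)] (hH : H ≤ (parity h2).ker) :
    2 * (#{δ | parity h2 δ = 0 ∧ δ ∉ H} + Nat.card H) = N := by
  have hHcard : Nat.card H = #{δ | parity h2 δ = 0 ∧ δ ∈ H} := by
    rw [← Fintype.card_subtype, ← Nat.card_eq_fintype_card]
    exact Nat.card_congr (Equiv.subtypeEquivRight fun δ => ⟨fun h => ⟨hH h, h⟩, And.right⟩)
  calc 2 * (#{δ | parity h2 δ = 0 ∧ δ ∉ H} + Nat.card H)
      = 2 * #{δ | parity h2 δ = 0} := by
        rw [hHcard, add_comm, ← card_filter_add_card_filter_not (s := {δ | parity h2 δ = 0})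
          (· ∈ H), filter_filter, filter_filter]
    _ = #{δ | parity h2 δ = 0} + #{δ | ¬parity h2 δ = 0} := by
        rw [two_mul, AddMonoidHom.card_filter_eq_zero_eq_card_filter_ne_zero
          (parity_surjective h2)]
    _ = N := by rw [card_filter_add_card_filter_not, card_univ, ZMod.card]

end ZMod

section PartnerMaps
open ZMod

variable {N : ℕ} [NeZero N] (h2 : 2 ∣ N) {H : AddSubgroup (ZMod N)} [DecidablePred (· ∈ H)]
  {ι : Type*} {R : Finset ι} {ρ : ι → ZMod N → ZMod N}

theorem sum_card_parity_eq (hρH : ∀ i ∈ R, ∀ x, ρ i x - x ∉ H)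
    (hcover : ∀ x, ∀ δ ∉ H, ∃! i, i ∈ R ∧ ρ i x = x + δ) :
    ∑ i ∈ R, #{x | parity h2 (ρ i x) = parity h2 x}
      = N * #{δ | parity h2 δ = 0 ∧ δ ∉ H} := by
  simp only [card_filter]
  rw [sum_comm]
  have hx : ∀ x, #{i ∈ R | parity h2 (ρ i x) = parity h2 x}
      = #{δ | parity h2 δ = 0 ∧ δ ∉ H} := by
    intro x
    refine card_bij (fun i _ => ρ i x - x) (fun i hi => ?_) (fun i hi j hj hij => ?_)
      (fun δ hδ => ?_)
    · simp only [mem_filter, mem_univ, true_and] at hi ⊢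
      exact ⟨by rw [map_sub, hi.2, sub_self], hρH i hi.1 x⟩
    · simp only [mem_filter] at hi hj
      exact (hcover x _ (hρH i hi.1 x)).unique ⟨hi.1, by ring⟩ ⟨hj.1, by rw [hij]; ring⟩
    · simp only [mem_filter, mem_univ, true_and] at hδ
      obtain ⟨i, ⟨hi, hiδ⟩, -⟩ := hcover x δ hδ.2
      refine ⟨i, mem_filter.mpr ⟨hi, ?_⟩, by rw [hiδ]; ring⟩
      rw [hiδ, map_add, hδ.1, add_zero]
  simp_rw [← card_filter, hx, sum_const, card_univ, ZMod.card, smul_eq_mul]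

variable [AddAction (ZMod N) ι]

theorem card_parity_vadd (hequiv : ∀ g : ZMod N, ∀ i ∈ R, ∀ x, ρ (g +ᵥ i) (g + x) = g + ρ i x)
    (g : ZMod N) {i : ι} (hi : i ∈ R) :
    #{x | parity h2 (ρ (g +ᵥ i) x) = parity h2 x} = #{x | parity h2 (ρ i x) = parity h2 x} := by
  refine card_bij' (fun x _ => -g + x) (fun x _ => g + x) (fun x hx => ?_) (fun x hx => ?_)
    (by simp) (by simp)
  · simp only [mem_filter, mem_univ, true_and] at hx ⊢
    rwa [← add_neg_cancel_left g x, hequiv g i hi, map_add, map_add, add_right_inj] at hx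
  · simp only [mem_filter, mem_univ, true_and] at hx ⊢
    rwa [hequiv g i hi, map_add, map_add, add_right_inj]

theorem four_dvd_card_parity_eq_zero_not_mem (hH : Even (Nat.card H))
    (hR : ∀ g : ZMod N, ∀ i ∈ R, g +ᵥ i ∈ R) (hinv : ∀ i ∈ R, Involutive (ρ i))
    (hρH : ∀ i ∈ R, ∀ x, ρ i x - x ∉ H) (hcover : ∀ x, ∀ δ ∉ H, ∃! i, i ∈ R ∧ ρ i x = x + δ)
    (hequiv : ∀ g : ZMod N, ∀ i ∈ R, ∀ x, ρ (g +ᵥ i) (g + x) = g + ρ i x) :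
    4 ∣ #{δ | parity h2 δ = 0 ∧ δ ∉ H} := by
  have hstab : ∀ i ∈ R, ∀ x, ∀ t ∈ stabilizer (ZMod N) i, ρ i (x + t) = ρ i x + t := by
    intro i hi x t ht
    calc ρ i (x + t) = ρ (t +ᵥ i) (t + x) := by rw [mem_stabilizer_iff.mp ht, add_comm]
      _ = ρ i x + t := by rw [hequiv t i hi, add_comm]
  have hsum := mul_card_dvd_sum_of_mul_card_stabilizer_dvd hR (card_parity_vadd h2 hequiv)
    fun i hi => four_mul_card_dvd_card_parity_eq h2 hH (hinv i hi) (hstab i hi) (hρH i hi)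
  rw [sum_card_parity_eq h2 hρH hcover, Nat.card_zmod, mul_comm 4] at hsum
  exact Nat.dvd_of_mul_dvd_mul_left (NeZero.pos N) hsum

end PartnerMaps

instance Sym2.addAction {G V : Type*} [AddMonoid G] [AddAction G V] : AddAction G (Sym2 V) where
  vadd g := Sym2.map (g +ᵥ ·)
  zero_vadd z := by
    change Sym2.map (fun v => (0 : G) +ᵥ v) z = z
    simp
  add_vadd g h z := by
    change Sym2.map _ z = Sym2.map _ (Sym2.map _ z)
    simp [Sym2.map_map, add_vadd]

theorem Sym2.vadd_mk {G V : Type*} [AddMonoid G] [AddAction G V] (g : G) (a b : V) :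
    g +ᵥ s(a, b) = s(g +ᵥ a, g +ᵥ b) := rfl

def IsPartnerFun {α : Type*} (M : Set (Sym2 α)) (π : α → α) : Prop :=
  ∀ a b, s(a, b) ∈ M ↔ b = π a

namespace IsPartnerFun
variable {α : Type*} {M : Set (Sym2 α)} {π π' : α → α}

theorem exists_of_existsUnique (hM : ∀ a, ∃! z, z ∈ M ∧ a ∈ z) : ∃ π, IsPartnerFun M π := by
  have hpartner : ∀ a, ∃ b, s(a, b) ∈ M := fun a => by
    obtain ⟨z, ⟨hz, ha⟩, -⟩ := hM a
    obtain ⟨b, rfl⟩ := Sym2.mem_iff_exists.mp ha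
    exact ⟨b, hz⟩
  choose π hπ using hpartner
  refine ⟨π, fun a b => ⟨fun hab => ?_, fun h => h ▸ hπ a⟩⟩
  exact Sym2.congr_right.mp
    ((hM a).unique ⟨hab, Sym2.mem_mk_left a b⟩ ⟨hπ a, Sym2.mem_mk_left _ _⟩)

theorem involutive (h : IsPartnerFun M π) : Involutive π := fun a =>
  ((h _ _).mp (Sym2.eq_swap ▸ (h a _).mpr rfl)).symm

theorem unique (h : IsPartnerFun M π) (h' : IsPartnerFun M π') : π = π' :=
  funext fun a => (h' a _).mp ((h a _).mpr rfl)

theorem adj {Γ : SimpleGraph α} (h : IsPartnerFun M π) (hM : M ⊆ Γ.edgeSet) (a : α) :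
    Γ.Adj a (π a) :=
  hM ((h a _).mpr rfl)

theorem vadd {G : Type*} [AddGroup G] [AddAction G α] (h : IsPartnerFun M π) (g : G) :
    IsPartnerFun (g +ᵥ M) (fun a => g +ᵥ π (-g +ᵥ a)) := fun a b => by
  rw [Set.mem_vadd_set_iff_neg_vadd_mem, Sym2.vadd_mk, h, neg_vadd_eq_iff]

end IsPartnerFun

section RegularAction
variable {G V : Type*} [AddCommGroup G] [AddAction G V]

def fiberStabilizer {β : Type*} (q : V → β)
    (hq : ∀ (g : G) u w, q (g +ᵥ u) = q (g +ᵥ w) ↔ q u = q w) (v₀ : V) : AddSubgroup G where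
  carrier := {g | q (g +ᵥ v₀) = q v₀}
  zero_mem' := by simp
  add_mem' {a b} ha hb := by
    change q ((a + b) +ᵥ v₀) = q v₀
    rw [add_vadd, ← ha]
    exact (hq a _ _).mpr hb
  neg_mem' {a} ha := by
    change q (-a +ᵥ v₀) = q v₀
    have h := (hq (-a) (a +ᵥ v₀) v₀).mpr ha
    rwa [neg_vadd_vadd, eq_comm] at h

variable {β : Type*} {q : V → β} {hq : ∀ (g : G) u w, q (g +ᵥ u) = q (g +ᵥ w) ↔ q u = q w}
  {v₀ : V}

theorem sub_mem_fiberStabilizer_iff (x y : G) :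
    y - x ∈ fiberStabilizer q hq v₀ ↔ q (x +ᵥ v₀) = q (y +ᵥ v₀) := by
  change q ((y - x) +ᵥ v₀) = q v₀ ↔ _
  rw [← hq x, vadd_vadd, add_sub_cancel, eq_comm]

theorem card_fiberStabilizer (hreg : Bijective fun g : G => g +ᵥ v₀) :
    Nat.card (fiberStabilizer q hq v₀) = Nat.card {u // q u = q v₀} :=
  Nat.card_congr (Equiv.subtypeEquiv (Equiv.ofBijective _ hreg) fun _ => Iff.rfl)

/-- `ρ M` is the partner map of the factor `M` read in the coordinates `x ↦ x +ᵥ v₀`. -/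
theorem IsOneFactorization.exists_equivariant_partner_maps {Γ : SimpleGraph V}
    {F : Set (Set (Sym2 V))} (hF : IsOneFactorization Γ F)
    (hFinv : ∀ g : G, ∀ M ∈ F, g +ᵥ M ∈ F) (hreg : Bijective fun g : G => g +ᵥ v₀)
    {H : AddSubgroup G} (hadj : ∀ x y : G, Γ.Adj (x +ᵥ v₀) (y +ᵥ v₀) ↔ y - x ∉ H) :
    ∃ ρ : Set (Sym2 V) → G → G, (∀ M ∈ F, Involutive (ρ M)) ∧ (∀ M ∈ F, ∀ x, ρ M x - x ∉ H) ∧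
      (∀ x, ∀ δ ∉ H, ∃! M, M ∈ F ∧ ρ M x = x + δ) ∧
      ∀ g, ∀ M ∈ F, ∀ x, ρ (g +ᵥ M) (g + x) = g + ρ M x := by
  have : Nonempty (V → V) := ⟨id⟩
  choose! π hπ using fun M hM => IsPartnerFun.exists_of_existsUnique (hF.1 M hM).2
  let e := Equiv.ofBijective _ hreg
  have he : ∀ x, e x = x +ᵥ v₀ := fun _ => rfl
  have he_vadd : ∀ g u, e.symm (g +ᵥ u) = g + e.symm u := fun g u => by
    rw [Equiv.symm_apply_eq, he, ← vadd_vadd, ← he, Equiv.apply_symm_apply]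
  have hmem : ∀ M ∈ F, ∀ x y, s(e x, e y) ∈ M ↔ y = e.symm (π M (e x)) := fun M hM x y => by
    rw [hπ M hM, Equiv.eq_symm_apply]
  refine ⟨fun M x => e.symm (π M (e x)), fun M hM x => ?_, fun M hM x => ?_,
    fun x δ hδ => ?_, fun g M hM x => ?_⟩
  · simp [(hπ M hM).involutive (e x)]
  · rw [← hadj, ← he, ← he, Equiv.apply_symm_apply]
    exact (hπ M hM).adj (hF.1 M hM).1 (e x)
  · have hedge : s(e x, e (x + δ)) ∈ Γ.edgeSet := (hadj x (x + δ)).mpr (by simpa using hδ)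
    obtain ⟨M, ⟨hMF, hM⟩, huniq⟩ := hF.2 _ hedge
    exact ⟨M, ⟨hMF, ((hmem M hMF x _).mp hM).symm⟩,
      fun M' hM' => huniq M' ⟨hM'.1, (hmem M' hM'.1 x _).mpr hM'.2.symm⟩⟩
  · change e.symm (π (g +ᵥ M) (e (g + x))) = g + e.symm (π M (e x))
    rw [← ((hπ M hM).vadd g).unique (hπ _ (hFinv g M hM)), he, add_vadd]
    simp only [neg_vadd_vadd, ← he, he_vadd]

end RegularAction

theorem mul_modEq_two_mul_of_regular_oneFactorization {m n : ℕ} (hm : Even m) (hn : Even n)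
    [NeZero (m * n)] [AddAction (ZMod (m * n)) (Fin m × Fin n)]
    (hreg : ∀ u w : Fin m × Fin n, ∃! g : ZMod (m * n), g +ᵥ u = w)
    (hadj : ∀ (g : ZMod (m * n)) u w,
      (completeMultipartite m n).Adj (g +ᵥ u) (g +ᵥ w) ↔ (completeMultipartite m n).Adj u w)
    {F : Set (Set (Sym2 (Fin m × Fin n)))} (hF : IsOneFactorization (completeMultipartite m n) F)
    (hFinv : ∀ g : ZMod (m * n), ∀ M ∈ F, g +ᵥ M ∈ F) :
    m * n ≡ 2 * n [MOD 8] := by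
  classical
  have h2 : 2 ∣ m * n := hm.two_dvd.mul_right n
  have hmn : 0 < m * n := NeZero.pos _
  let v₀ : Fin m × Fin n := (⟨0, Nat.pos_of_mul_pos_right hmn⟩, ⟨0, Nat.pos_of_mul_pos_left hmn⟩)
  have hbij : Bijective fun g : ZMod (m * n) => g +ᵥ v₀ :=
    ⟨fun x y h => (hreg v₀ _).unique h rfl, fun u => (hreg v₀ u).exists⟩
  let H := fiberStabilizer Prod.fst (fun g u w => not_iff_not.mp (hadj g u w)) v₀
  have hHcard : Nat.card H = n := by
    rw [card_fiberStabilizer hbij,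
      Nat.card_congr (Equiv.prodSubtypeFstEquivSubtypeProd (p := (· = v₀.1)))]
    simp
  have hHindex : H.index = m := by
    have := H.index_mul_card
    rw [hHcard, Nat.card_zmod] at this
    exact Nat.eq_of_mul_eq_mul_right (Nat.pos_of_mul_pos_left hmn) this
  obtain ⟨ρ, hinv, hρH, hcover, hequiv⟩ := hF.exists_equivariant_partner_maps hFinv hbij
    (H := H) fun x y => (sub_mem_fiberStabilizer_iff x y).not.symm
  have hFfin := Set.toFinite F
  obtain ⟨c, hc⟩ := four_dvd_card_parity_eq_zero_not_mem h2 (hHcard ▸ hn) (R := hFfin.toFinset)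
    (by simpa using hFinv) (by simpa using hinv) (by simpa using hρH) (by simpa using hcover)
    (by simpa using hequiv)
  have hcount := ZMod.two_mul_card_parity_eq_zero_not_mem_add_card h2
    (ZMod.le_ker_parity_of_even_index h2 (hHindex ▸ hm))
  rw [hHcard, hc] at hcount
  rw [← hcount, Nat.ModEq]
  omega

/-- If `m = 2^v d` and `n = 2 d'` with `d, d'` odd and `v ≥ 2`, there is no cyclic
1-factorization of `K_{m×n}`. -/
theorem no_cyclic_oneFactorization_of_two_pow (v d d' : ℕ)
    (hv : 2 ≤ v) (hd : Odd d) (hd' : Odd d') :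
    ¬ HasRegularOneFactorization (completeMultipartite (2 ^ v * d) (2 * d'))
        (Multiplicative (ZMod ((2 ^ v * d) * (2 * d')))) := by
  rintro ⟨φ, F, hF, hadj, hmap, hsharp⟩
  let _ : AddAction (ZMod (2 ^ v * d * (2 * d'))) (Fin (2 ^ v * d) × Fin (2 * d')) :=
    AddAction.compHom _ (AddMonoidHom.toMultiplicativeLeft.symm φ)
  have : NeZero (2 ^ v * d * (2 * d')) := ⟨by have := hd.pos; have := hd'.pos; positivity⟩
  have hmod := mul_modEq_two_mul_of_regular_oneFactorization
    ((Nat.even_pow.mpr ⟨even_two, by omega⟩).mul_right d) (even_two_mul d')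
    (fun u w => Multiplicative.toAdd.existsUnique_congr_left.mp (hsharp u w))
    (fun g => hadj (Multiplicative.ofAdd g)) hF (fun g => hmap (Multiplicative.ofAdd g))
  obtain ⟨w, rfl⟩ : ∃ w, v = w + 2 := ⟨v - 2, by omega⟩
  obtain ⟨k, rfl⟩ := hd'
  rw [show 2 ^ (w + 2) * d * (2 * (2 * k + 1)) = 8 * (2 ^ w * d * (2 * k + 1)) by ring,
    Nat.ModEq] at hmod
  omega
end

section
/- If m = p^v where p is a prime with p ≡ 1 (mod 4) and v ≥ 1, then there is no 1-factorization of the complete multipartite graph K_{m×2} admitting a cyclic group of automorphisms acting sharply transitively on the vertex set. -/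
open SimpleGraph

/-!
Let the cyclic group `G` of order `2m`, `m = p ^ v`, act regularly on `K_{m×2}`. Automorphisms
commute with the antipodal map `u ↦ ū` (`ū` is the only non-neighbour of `u`), and in an abelian
regular group the only maps commuting with the action are the group elements themselves; so
`u ↦ ū` is the action of an involution `τ`. Pick `δ` of order `p` and a vertex `w`; then `w` and
`δ w` are adjacent, so some factor `M` contains the edge `{w, δ w}`. Since `|G| = |V|` exceeds
the degree of `w`, the stabilizer of `M` in `G` is nontrivial, hence contains the unique subgroup
of order `2` or that of order `p`. If `τ` fixes `M`, the mates of the vertices `(i, 0)` pair the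
`m` parts off, which is impossible for `m` odd. If `δ` fixes `M`, it maps `{w, δ w}` to the edge
`{δ w, δ² w}` of `M`, so `δ² w = w`, contradicting that `δ` has odd order.
-/

namespace IsOneFactor

variable {V : Type*} {Γ : SimpleGraph V} {M : Set (Sym2 V)}

theorem exists_mem (hM : IsOneFactor Γ M) (v : V) : ∃ w, s(v, w) ∈ M := by
  obtain ⟨e, ⟨he, hv⟩, -⟩ := hM.2 v
  exact ⟨Sym2.Mem.other hv, by rwa [Sym2.other_spec hv]⟩

theorem eq_of_mem (hM : IsOneFactor Γ M) {v w w' : V} (h : s(v, w) ∈ M) (h' : s(v, w') ∈ M) :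
    w = w' :=
  Sym2.congr_right.mp <| (hM.2 v).unique ⟨h, Sym2.mem_mk_left v w⟩ ⟨h', Sym2.mem_mk_left v w'⟩

theorem adj_of_mem (hM : IsOneFactor Γ M) {v w : V} (h : s(v, w) ∈ M) : Γ.Adj v w :=
  hM.1 h

theorem apply_apply_eq (hM : IsOneFactor Γ M) {π : V → V} (hπ : ∀ e ∈ M, Sym2.map π e ∈ M)
    {w : V} (hw : s(w, π w) ∈ M) : π (π w) = w := by
  have h : s(π w, π (π w)) ∈ M := by simpa using hπ _ hw
  exact hM.eq_of_mem h (Sym2.eq_swap ▸ hw)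

end IsOneFactor

theorem eq_one_of_apply_eq_self {V G : Type*} [Group G] {φ : G →* Equiv.Perm V}
    (hreg : ∀ u v, ∃! a : G, φ a u = v) {a : G} {u : V} (h : φ a u = u) : a = 1 :=
  (hreg u u).unique h (by rw [map_one, Equiv.Perm.one_apply])

theorem coe_eq_of_apply_eq_of_commute {V G : Type*} [CommGroup G] {φ : G →* Equiv.Perm V}
    (htrans : ∀ u v, ∃ a : G, φ a u = v) {f : V → V} (hf : ∀ b x, φ b (f x) = f (φ b x))
    {a : G} {w : V} (h : φ a w = f w) : ⇑(φ a) = f := by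
  funext x
  obtain ⟨b, rfl⟩ := htrans w x
  rw [← Equiv.Perm.mul_apply, ← map_mul, mul_comm, map_mul, Equiv.Perm.mul_apply, h, hf]

section Stabilizer

variable {V G : Type*} [Group G]

theorem image_sym2Map_mul (φ : G →* Equiv.Perm V) (a b : G) (M : Set (Sym2 V)) :
    Sym2.map (φ (a * b)) '' M = Sym2.map (φ a) '' (Sym2.map (φ b) '' M) := by
  rw [map_mul, Equiv.Perm.coe_mul, Sym2.map_comp, Set.image_comp]

def factorStabilizer (φ : G →* Equiv.Perm V) (M : Set (Sym2 V)) : Subgroup G where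
  carrier := {a | Sym2.map (φ a) '' M = M}
  one_mem' := by simp
  mul_mem' {a b} (ha : _ = M) (hb : _ = M) := show _ = M by rw [image_sym2Map_mul, hb, ha]
  inv_mem' {a} (ha : _ = M) := show _ = M by
    conv_lhs => rw [← ha, ← image_sym2Map_mul, inv_mul_cancel]
    simp

theorem mem_factorStabilizer {φ : G →* Equiv.Perm V} {M : Set (Sym2 V)} {a : G} :
    a ∈ factorStabilizer φ M ↔ Sym2.map (φ a) '' M = M :=
  Iff.rfl

theorem sym2Map_mem_of_mem_factorStabilizer {φ : G →* Equiv.Perm V} {M : Set (Sym2 V)} {a : G}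
    (ha : a ∈ factorStabilizer φ M) {e : Sym2 V} (he : e ∈ M) : Sym2.map (φ a) e ∈ M :=
  ha ▸ Set.mem_image_of_mem _ he

theorem inv_mul_mem_factorStabilizer {φ : G →* Equiv.Perm V} {M : Set (Sym2 V)} {a b : G}
    (h : Sym2.map (φ a) '' M = Sym2.map (φ b) '' M) : a⁻¹ * b ∈ factorStabilizer φ M := by
  rw [mem_factorStabilizer, image_sym2Map_mul, ← h, ← image_sym2Map_mul, inv_mul_cancel]
  simp

theorem factorStabilizer_ne_bot [Finite V] {Γ : SimpleGraph V} {φ : G →* Equiv.Perm V}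
    {F : Set (Set (Sym2 V))} (hF : IsOneFactorization Γ F)
    (hmaps : ∀ a : G, ∀ M ∈ F, Sym2.map (φ a) '' M ∈ F) (hreg : ∀ u v : V, ∃! a : G, φ a u = v)
    {M : Set (Sym2 V)} (hM : M ∈ F) (w : V) : factorStabilizer φ M ≠ ⊥ := by
  intro hbot
  have hfactor (a : G) : IsOneFactor Γ (Sym2.map (φ a) '' M) := hF.1 _ (hmaps a M hM)
  choose ψ hψ using fun a => (hfactor a).exists_mem w
  have hψ_inj : Function.Injective ψ := by
    intro a b hab
    have hab' : Sym2.map (φ a) '' M = Sym2.map (φ b) '' M :=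
      (hF.2 _ ((hfactor a).1 (hψ a))).unique ⟨hmaps a M hM, hψ a⟩ ⟨hmaps b M hM, hab ▸ hψ b⟩
    have := inv_mul_mem_factorStabilizer hab'
    rwa [hbot, Subgroup.mem_bot, inv_mul_eq_one] at this
  have hψ_ne (a : G) : ψ a ≠ w := ((hfactor a).adj_of_mem (hψ a)).ne'
  let orbit : G ≃ V := Equiv.ofBijective (fun a => φ a w)
    ⟨fun a b h => (hreg w _).unique h rfl, fun v => (hreg w v).exists⟩
  have : Finite G := .of_equiv V orbit.symm
  obtain ⟨a, ha⟩ := Finite.surjective_of_injective (orbit.symm.injective.comp hψ_inj) (orbit.symm w)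
  exact hψ_ne a (orbit.symm.injective ha)

theorem sq_eq_one_of_mem_factorStabilizer {V G : Type*} [Group G] {Γ : SimpleGraph V}
    {φ : G →* Equiv.Perm V} (hreg : ∀ u v, ∃! a : G, φ a u = v) {M : Set (Sym2 V)}
    (hM : IsOneFactor Γ M) {a : G} (ha : a ∈ factorStabilizer φ M) {w : V}
    (hw : s(w, φ a w) ∈ M) : a ^ 2 = 1 := by
  apply eq_one_of_apply_eq_self hreg (u := w)
  rw [sq, map_mul, Equiv.Perm.mul_apply]
  exact hM.apply_apply_eq (fun _ => sym2Map_mem_of_mem_factorStabilizer ha) hw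

end Stabilizer

theorem Nat.Prime.eq_or_eq_two_of_dvd_pow_mul_two {p q v : ℕ} (hq : q.Prime) (hp : p.Prime)
    (h : q ∣ p ^ v * 2) : q = p ∨ q = 2 := by
  rcases (Nat.Prime.dvd_mul hq).mp h with h | h
  · exact .inl ((Nat.prime_dvd_prime_iff_eq hq hp).mp (hq.dvd_of_dvd_pow h))
  · exact .inr ((Nat.prime_dvd_prime_iff_eq hq Nat.prime_two).mp h)

/-- In a finite cyclic group a subgroup `S` is the kernel of `x ↦ x ^ |S|`. -/
theorem IsCyclic.mem_of_orderOf_dvd_natCard {G : Type*} [CommGroup G] [IsCyclic G] [Finite G]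
    (S : Subgroup G) {x : G} (hx : orderOf x ∣ Nat.card S) : x ∈ S := by
  let K := (powMonoidHom (Nat.card S) : G →* G).ker
  have hSK : S ≤ K := fun y hy => by
    have h := congrArg Subtype.val (pow_card_eq_one' (x := (⟨y, hy⟩ : S)))
    simpa only [K, MonoidHom.mem_ker, powMonoidHom_apply, Subgroup.coe_pow,
      OneMemClass.coe_one] using h
  have hK : Nat.card K = Nat.card S := by
    rw [IsCyclic.card_powMonoidHom_ker, Nat.gcd_eq_right S.card_subgroup_dvd_card]
  rw [Subgroup.eq_of_le_of_card_ge hSK hK.le]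
  simpa [K] using orderOf_dvd_iff_pow_eq_one.mp hx

namespace completeMultipartite

variable {m : ℕ}

theorem adj_iff {n : ℕ} {u v : Fin m × Fin n} :
    (completeMultipartite m n).Adj u v ↔ u.1 ≠ v.1 :=
  Iff.rfl

def antipode (u : Fin m × Fin 2) : Fin m × Fin 2 := (u.1, u.2 + 1)

theorem antipode_antipode (u : Fin m × Fin 2) : antipode (antipode u) = u :=
  Prod.ext rfl (by simp [antipode, add_assoc])

theorem not_adj_antipode (u : Fin m × Fin 2) : ¬ (completeMultipartite m 2).Adj u (antipode u) :=
  fun h => h rfl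

theorem not_adj_iff {u v : Fin m × Fin 2} :
    ¬ (completeMultipartite m 2).Adj u v ↔ v = u ∨ v = antipode u := by
  obtain ⟨i, b⟩ := u
  obtain ⟨j, c⟩ := v
  simp only [adj_iff, not_ne_iff, antipode, Prod.mk.injEq]
  fin_cases b <;> fin_cases c <;> simp [eq_comm]

theorem antipode_ne (u : Fin m × Fin 2) : antipode u ≠ u := fun h => by
  simpa [antipode] using congrArg Prod.snd h

theorem apply_antipode_of_adj_iff {π : Equiv.Perm (Fin m × Fin 2)}
    (hπ : ∀ u v, (completeMultipartite m 2).Adj (π u) (π v) ↔ (completeMultipartite m 2).Adj u v)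
    (u : Fin m × Fin 2) : π (antipode u) = antipode (π u) := by
  have h : ¬ (completeMultipartite m 2).Adj (π u) (π (antipode u)) :=
    (hπ _ _).not.mpr (not_adj_antipode u)
  rcases not_adj_iff.mp h with h | h
  · exact absurd (π.injective h) (antipode_ne u)
  · exact h

theorem even_of_isOneFactor_of_antipode_mem {M : Set (Sym2 (Fin m × Fin 2))}
    (hM : IsOneFactor (completeMultipartite m 2) M)
    (hanti : ∀ e ∈ M, Sym2.map antipode e ∈ M) : Even m := by
  choose mate hmate using fun i : Fin m => hM.exists_mem (i, 0)
  have hback (i : Fin m) : ∃ b, s(((mate i).1, (0 : Fin 2)), (i, b)) ∈ M := by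
    have h := hmate i
    generalize mate i = x at h ⊢
    obtain ⟨j, b⟩ := x
    fin_cases b
    · exact ⟨0, by rwa [Sym2.eq_swap]⟩
    · exact ⟨1, by simpa [antipode, Sym2.eq_swap] using hanti _ h⟩
  have hinv : Function.Involutive fun i => (mate i).1 := fun i => by
    obtain ⟨b, hb⟩ := hback i
    exact congrArg Prod.fst (hM.eq_of_mem (hmate _) hb)
  by_contra hodd
  have h2 : ¬ 2 ∣ Fintype.card (Fin m) := by simpa [← even_iff_two_dvd] using hodd
  obtain ⟨i, hi⟩ := Equiv.Perm.exists_fixed_point_of_prime (n := 1) h2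
    (σ := hinv.toPerm) (Equiv.ext fun i => hinv i)
  exact (hM.adj_of_mem (hmate i)) hi.symm

theorem sq_eq_one_of_not_adj {G : Type*} [Group G] {φ : G →* Equiv.Perm (Fin m × Fin 2)}
    (hadj : ∀ a u v, (completeMultipartite m 2).Adj (φ a u) (φ a v) ↔
      (completeMultipartite m 2).Adj u v)
    (hreg : ∀ u v, ∃! a : G, φ a u = v) {a : G} {w : Fin m × Fin 2}
    (h : ¬ (completeMultipartite m 2).Adj w (φ a w)) : a ^ 2 = 1 := by
  rcases not_adj_iff.mp h with h | h
  · rw [eq_one_of_apply_eq_self hreg h, one_pow]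
  · apply eq_one_of_apply_eq_self hreg (u := w)
    rw [sq, map_mul, Equiv.Perm.mul_apply, h, apply_antipode_of_adj_iff (hadj a), h,
      antipode_antipode]

end completeMultipartite

/-- If `m = p^v` with `p` prime, `p ≡ 1 (mod 4)` and `v ≥ 1`, there is no cyclic
1-factorization of `K_{m×2}`. -/
theorem no_cyclic_oneFactorization_of_prime_pow (p v : ℕ)
    (hp : p.Prime) (hp4 : p % 4 = 1) (hv : 1 ≤ v) :
    ¬ HasRegularOneFactorization (completeMultipartite (p ^ v) 2)
        (Multiplicative (ZMod (p ^ v * 2))) := by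
  rintro ⟨φ, F, hF, hadj, hmaps, hreg⟩
  have := Fact.mk hp
  have hp2 : p ≠ 2 := by omega
  have hcard : Nat.card (Multiplicative (ZMod (p ^ v * 2))) = p ^ v * 2 := by simp
  let w : Fin (p ^ v) × Fin 2 := (⟨0, pow_pos hp.pos v⟩, 0)
  obtain ⟨τ, hτw⟩ := (hreg w (completeMultipartite.antipode w)).exists
  have hτ : ⇑(φ τ) = completeMultipartite.antipode :=
    coe_eq_of_apply_eq_of_commute (fun u v => (hreg u v).exists)
      (fun b => completeMultipartite.apply_antipode_of_adj_iff (hadj b)) hτw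
  have hτ2 : τ ^ 2 = 1 := completeMultipartite.sq_eq_one_of_not_adj hadj hreg
    (hτw ▸ completeMultipartite.not_adj_antipode w)
  obtain ⟨δ, hδ⟩ := exists_prime_orderOf_dvd_card' (G := Multiplicative (ZMod (p ^ v * 2))) p
    (by rw [hcard]; exact (dvd_pow_self p (by omega)).mul_right 2)
  have hδ2 : δ ^ 2 ≠ 1 := fun h =>
    hp2 ((Nat.prime_dvd_prime_iff_eq hp Nat.prime_two).mp (hδ ▸ orderOf_dvd_of_pow_eq_one h))
  have hδw : (completeMultipartite (p ^ v) 2).Adj w (φ δ w) := by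
    by_contra h
    exact hδ2 (completeMultipartite.sq_eq_one_of_not_adj hadj hreg h)
  obtain ⟨M, ⟨hMF, hwM⟩, -⟩ := hF.2 s(w, φ δ w) hδw
  obtain ⟨q, hq, hqS⟩ := Nat.exists_prime_and_dvd
    ((Subgroup.eq_bot_iff_card _).not.mp (factorStabilizer_ne_bot hF hmaps hreg hMF w))
  rcases hq.eq_or_eq_two_of_dvd_pow_mul_two hp
    (hcard ▸ hqS.trans (Subgroup.card_subgroup_dvd_card _)) with rfl | rfl
  · exact hδ2 (sq_eq_one_of_mem_factorStabilizer hreg (hF.1 M hMF)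
      (IsCyclic.mem_of_orderOf_dvd_natCard _ (by rwa [hδ])) hwM)
  · have hτS := IsCyclic.mem_of_orderOf_dvd_natCard _ ((orderOf_dvd_of_pow_eq_one hτ2).trans hqS)
    exact Nat.not_even_iff_odd.mpr (hp.odd_of_ne_two hp2).pow <|
      completeMultipartite.even_of_isOneFactor_of_antipode_mem (hF.1 M hMF)
        (fun _ => hτ ▸ sym2Map_mem_of_mem_factorStabilizer hτS)
end

section
/- If m = 2d and n = 2d' where d and d' are odd, then there exists a 1-factorization of the complete multipartite graph K_{m×n} admitting a cyclic group of automorphisms acting sharply transitively on the vertex set. -/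
open SimpleGraph

/-!
Identify `K_{2d × 2d'}` with the graph on `ZMod (4dd')` whose parts are the residue classes
mod `2d`. Translations then act regularly by automorphisms, so it suffices to partition the
edges into perfect matchings permuted by translations. Every edge is `{x, x + t}` for a unique
vertex `x` and a unique `t = c + 4dr` with `0 < c < 2d`, `r < d'`. For odd `c ≠ d`, the edges
`{x, x + t}` with `x` of fixed parity form a perfect matching. The remaining edges, `c` even or
`c = d`, are grouped by `r` and a centre `a ∈ ZMod (2d)`: residues `a - k` and `a + k` are
joined by the step `2k + 4dr`, and `a`, `a + d` by `d + 4dr`. As `d` is odd, the step `d` is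
not among the even ones, so every edge lies in exactly one of these matchings.
-/

section Matchings

variable {V W ι A : Type*}

def matchingOf (f : V → V) : Set (Sym2 V) := Set.range fun v => s(v, f v)

theorem mem_matchingOf_and_mem_iff {f : V → V} (hf : Function.Involutive f) {z : Sym2 V} {v : V} :
    z ∈ matchingOf f ∧ v ∈ z ↔ z = s(v, f v) := by
  constructor
  · rintro ⟨⟨x, rfl⟩, hv⟩
    rcases Sym2.mem_iff.mp hv with rfl | rfl
    · rfl
    · rw [hf x, Sym2.eq_swap]
  · rintro rfl
    exact ⟨⟨v, rfl⟩, Sym2.mem_mk_left _ _⟩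

theorem image_matchingOf {f : V → V} {g : W → W} (e : V ≃ W) (h : ∀ v, g (e v) = e (f v)) :
    Sym2.map e '' matchingOf f = matchingOf g := by
  ext z
  constructor
  · rintro ⟨_, ⟨v, rfl⟩, rfl⟩
    exact ⟨e v, by simp only [h, Sym2.map_mk]⟩
  · rintro ⟨w, rfl⟩
    refine ⟨s(e.symm w, f (e.symm w)), ⟨_, rfl⟩, ?_⟩
    rw [Sym2.map_mk, ← h, e.apply_symm_apply]

theorem isOneFactorization_matchingOf (Γ : SimpleGraph V) (S : Set ι) (σ : ι → V → V)
    (hadj : ∀ i ∈ S, ∀ v, Γ.Adj v (σ i v))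
    (hinv : ∀ i ∈ S, Function.Involutive (σ i))
    (hex : ∀ u v, Γ.Adj u v → ∃ i ∈ S, σ i u = v)
    (hinj : ∀ i ∈ S, ∀ j ∈ S, ∀ v, σ i v = σ j v → i = j) :
    IsOneFactorization Γ ((fun i => matchingOf (σ i)) '' S) := by
  refine ⟨?_, ?_⟩
  · rintro _ ⟨i, hi, rfl⟩
    refine ⟨?_, fun v => ⟨s(v, σ i v), ?_, fun z hz => ?_⟩⟩
    · rintro _ ⟨v, rfl⟩
      exact hadj i hi v
    · exact (mem_matchingOf_and_mem_iff (hinv i hi)).2 rfl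
    · exact (mem_matchingOf_and_mem_iff (hinv i hi)).1 hz
  · intro e he
    induction e using Sym2.ind with
    | _ u v =>
    obtain ⟨i, hi, rfl⟩ := hex u v he
    refine ⟨matchingOf (σ i), ⟨⟨i, hi, rfl⟩, u, rfl⟩, ?_⟩
    rintro _ ⟨⟨j, hj, rfl⟩, hu⟩
    have := (mem_matchingOf_and_mem_iff (hinv j hj)).1 ⟨hu, Sym2.mem_mk_left _ _⟩
    rw [hinj i hi j hj u (Sym2.congr_right.1 this)]

theorem hasRegularOneFactorization_of_partner [Group A] (Γ : SimpleGraph V) (φ : A →* Equiv.Perm V)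
    (hφ : ∀ a u v, Γ.Adj (φ a u) (φ a v) ↔ Γ.Adj u v) (hreg : ∀ u v, ∃! a, φ a u = v)
    (S : Set ι) (σ : ι → V → V) (ψ : A → ι → ι)
    (hadj : ∀ i ∈ S, ∀ v, Γ.Adj v (σ i v))
    (hinv : ∀ i ∈ S, Function.Involutive (σ i))
    (hex : ∀ u v, Γ.Adj u v → ∃ i ∈ S, σ i u = v)
    (hinj : ∀ i ∈ S, ∀ j ∈ S, ∀ v, σ i v = σ j v → i = j)
    (hψ : ∀ a, ∀ i ∈ S, ψ a i ∈ S ∧ ∀ v, σ (ψ a i) (φ a v) = φ a (σ i v)) :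
    HasRegularOneFactorization Γ A := by
  refine ⟨φ, _, isOneFactorization_matchingOf Γ S σ hadj hinv hex hinj, hφ, ?_, hreg⟩
  rintro a _ ⟨i, hi, rfl⟩
  exact ⟨ψ a i, (hψ a i hi).1, (image_matchingOf (φ a) (hψ a i hi).2).symm⟩

end Matchings

section Transport

variable {V W : Type*}

def Equiv.sym2Map (e : V ≃ W) : Sym2 V ≃ Sym2 W where
  toFun := Sym2.map e
  invFun := Sym2.map e.symm
  left_inv z := by simp [Sym2.map_map]
  right_inv z := by simp [Sym2.map_map]

theorem Equiv.sym2Map_apply (e : V ≃ W) (z : Sym2 V) : e.sym2Map z = Sym2.map e z := rfl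

theorem Equiv.apply_mem_sym2Map_iff (e : V ≃ W) {v : V} {z : Sym2 V} :
    e v ∈ e.sym2Map z ↔ v ∈ z := by
  induction z using Sym2.ind with
  | _ x y => simp [Equiv.sym2Map_apply]

variable {Γ : SimpleGraph V} {Γ' : SimpleGraph W}

theorem SimpleGraph.Iso.sym2Map_mem_edgeSet_iff (e : Γ ≃g Γ') {z : Sym2 V} :
    e.toEquiv.sym2Map z ∈ Γ'.edgeSet ↔ z ∈ Γ.edgeSet := by
  induction z using Sym2.ind with
  | _ x y => exact e.map_adj_iff

theorem IsOneFactor.of_iso {M : Set (Sym2 V)} (h : IsOneFactor Γ M) (e : Γ ≃g Γ') :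
    IsOneFactor Γ' (e.toEquiv.sym2Map '' M) := by
  set E := e.toEquiv
  refine ⟨?_, fun w => ?_⟩
  · rintro _ ⟨z, hz, rfl⟩
    exact e.sym2Map_mem_edgeSet_iff.2 (h.1 hz)
  · rw [← E.apply_symm_apply w, ← E.sym2Map.existsUnique_congr_right]
    simpa only [E.sym2Map.injective.mem_set_image, E.apply_mem_sym2Map_iff] using h.2 (E.symm w)

theorem HasRegularOneFactorization.of_iso {A : Type*} [Group A]
    (h : HasRegularOneFactorization Γ A) (e : Γ ≃g Γ') : HasRegularOneFactorization Γ' A := by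
  obtain ⟨φ, F, ⟨hfac, hcov⟩, hadj, hmap, hreg⟩ := h
  let E := e.toEquiv
  have hconj : ∀ a z,
      Sym2.map (E.permCongr (φ a)) (E.sym2Map z) = E.sym2Map (Sym2.map (φ a) z) := by
    intro a z
    simp [Equiv.sym2Map_apply, Sym2.map_map, Function.comp_def]
  refine ⟨E.permCongrHom.toMonoidHom.comp φ, Equiv.Set.congr E.sym2Map '' F,
    ⟨?_, fun z hz => ?_⟩, fun a u v => ?_, ?_, fun u v => ?_⟩
  · rintro _ ⟨M, hM, rfl⟩
    exact (hfac M hM).of_iso e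
  · obtain ⟨z, rfl⟩ := E.sym2Map.surjective z
    rw [← (Equiv.Set.congr E.sym2Map).existsUnique_congr_right]
    simp only [(Equiv.Set.congr E.sym2Map).injective.mem_set_image]
    simpa only [Equiv.Set.congr_apply, E.sym2Map.injective.mem_set_image] using
      hcov z (e.sym2Map_mem_edgeSet_iff.1 hz)
  · exact (e.map_adj_iff.trans (hadj a _ _)).trans e.symm.map_adj_iff
  · rintro a _ ⟨M, hM, rfl⟩
    refine ⟨_, hmap a M hM, ?_⟩
    simp [Set.image_image, hconj]
  · exact (existsUnique_congr fun a => E.eq_symm_apply.symm).2 (hreg _ _)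

end Transport

namespace ZMod

theorem finEquiv_symm_val {n : ℕ} [NeZero n] (x : ZMod n) : ((finEquiv n).symm x : ℕ) = x.val := by
  cases n with
  | zero => exact absurd rfl (NeZero.ne 0)
  | succ n => rfl

theorem natCast_ne_zero_of_pos_of_lt {n c : ℕ} (h0 : 0 < c) (hc : c < n) : (c : ZMod n) ≠ 0 := by
  rw [Ne, natCast_eq_zero_iff]
  exact fun h => absurd (Nat.le_of_dvd h0 h) (by omega)

theorem val_neg_natCast_of_pos_of_lt {n k : ℕ} (h0 : 0 < k) (hk : k < n) :
    (-(k : ZMod n)).val = n - k := by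
  have : NeZero n := ⟨by omega⟩
  rw [neg_val, if_neg (natCast_ne_zero_of_pos_of_lt h0 hk), val_natCast_of_lt hk]

end ZMod

def residue {m k : ℕ} : ZMod (m * k) →+* ZMod m := ZMod.castHom (dvd_mul_right m k) (ZMod m)

def cyclicMultipartite (m k : ℕ) : SimpleGraph (ZMod (m * k)) :=
  (⊤ : SimpleGraph (ZMod m)).comap residue

theorem cyclicMultipartite_adj {m k : ℕ} {u v : ZMod (m * k)} :
    (cyclicMultipartite m k).Adj u v ↔ residue u ≠ residue v := Iff.rfl

def cyclicMultipartiteIso (m k : ℕ) [NeZero m] [NeZero k] :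
    cyclicMultipartite m k ≃g completeMultipartite m k where
  toEquiv := (ZMod.finEquiv (m * k)).symm.toEquiv.trans
    ((finCongr (mul_comm m k)).trans (finProdFinEquiv.symm.trans (Equiv.prodComm _ _)))
  map_rel_iff' {u v} := by
    simp only [completeMultipartite, cyclicMultipartite_adj, residue, ZMod.castHom_apply,
      ZMod.cast_eq_val, ne_eq, not_iff_not, ZMod.natCast_eq_natCast_iff', Fin.ext_iff]
    simp [ZMod.finEquiv_symm_val]

section Steps

variable {d d' : ℕ}

def parityHom (d d' : ℕ) : ZMod (2 * d * (2 * d')) →+* ZMod 2 :=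
  ZMod.castHom (dvd_mul_of_dvd_left (dvd_mul_right 2 d) _) (ZMod 2)

def step (c r : ℕ) : ZMod (2 * d * (2 * d')) := ((c + 4 * d * r : ℕ) : ZMod _)

theorem residue_step (c r : ℕ) :
    residue (step c r : ZMod (2 * d * (2 * d'))) = (c : ZMod (2 * d)) := by
  have h : ((2 * d : ℕ) : ZMod (2 * d)) = 0 := ZMod.natCast_self _
  push_cast at h
  simp only [step, map_natCast]
  push_cast
  linear_combination (2 * r : ZMod (2 * d)) * h

theorem parityHom_step (c r : ℕ) : parityHom d d' (step c r) = c := by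
  have h : (2 : ZMod 2) = 0 := rfl
  simp only [step, map_natCast]
  push_cast
  linear_combination (2 * d * r : ZMod 2) * h

theorem val_step {c r : ℕ} (hc : c < 4 * d) (hr : r < d') :
    (step c r : ZMod (2 * d * (2 * d'))).val = c + 4 * d * r := by
  have : 4 * d * (r + 1) ≤ 4 * d * d' := Nat.mul_le_mul_left _ hr
  exact ZMod.val_natCast_of_lt (by nlinarith)

theorem step_injective {c r c' r' : ℕ} (hc : c < 4 * d) (hr : r < d') (hc' : c' < 4 * d)
    (hr' : r' < d') (h : (step c r : ZMod (2 * d * (2 * d'))) = step c' r') : c = c' ∧ r = r' := by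
  have hval := congrArg ZMod.val h
  rw [val_step hc hr, val_step hc' hr'] at hval
  have hmod := congrArg (· % (4 * d)) hval
  simp only [Nat.add_mul_mod_self_left, Nat.mod_eq_of_lt hc, Nat.mod_eq_of_lt hc'] at hmod
  subst hmod
  exact ⟨rfl, Nat.eq_of_mul_eq_mul_left (by omega) (Nat.add_left_cancel hval)⟩

theorem step_add_step_ne_zero {c r c' r' : ℕ} (h0 : 0 < c) (hc : c < 2 * d) (hc' : c' < 2 * d) :
    (step c r : ZMod (2 * d * (2 * d'))) + step c' r' ≠ 0 := by
  rw [step, step, ← Nat.cast_add, Ne, ZMod.natCast_eq_zero_iff]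
  intro h
  have h4 : 4 * d ∣ (c + c') + 4 * d * (r + r') := by
    rw [show c + c' + 4 * d * (r + r') = c + 4 * d * r + (c' + 4 * d * r') by ring]
    exact (Dvd.intro d' (by ring) : 4 * d ∣ 2 * d * (2 * d')).trans h
  have := Nat.le_of_dvd (by omega) ((Nat.dvd_add_left (Dvd.intro _ rfl)).1 h4)
  omega

theorem exists_step_of_residue_ne_zero [NeZero d] [NeZero d'] {δ : ZMod (2 * d * (2 * d'))}
    (hδ : residue δ ≠ 0) :
    ∃ c r, 0 < c ∧ c < 2 * d ∧ r < d' ∧ (δ = step c r ∨ -δ = step c r) := by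
  have hδt : δ = (δ.val : ZMod _) := (ZMod.natCast_zmod_val δ).symm
  obtain ⟨c₀, q, hc₀, ht⟩ : ∃ c₀ q, c₀ < 4 * d ∧ δ.val = c₀ + 4 * d * q :=
    ⟨_, _, Nat.mod_lt _ (by have := NeZero.pos d; omega), (Nat.mod_add_div _ _).symm⟩
  have hq : q < d' := by
    have := ZMod.val_lt δ
    exact Nat.lt_of_mul_lt_mul_left (a := 4 * d) (by linarith)
  have hnd : ¬ 2 * d ∣ δ.val := by
    rwa [hδt, map_natCast, Ne, ZMod.natCast_eq_zero_iff] at hδ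
  have hc₀0 : c₀ ≠ 0 := fun h => hnd ⟨2 * q, by rw [ht, h]; ring⟩
  have hc₀2 : c₀ ≠ 2 * d := fun h => hnd ⟨2 * q + 1, by rw [ht, h]; ring⟩
  rcases lt_or_gt_of_ne hc₀2 with hlt | hgt
  · exact ⟨c₀, q, by omega, hlt, hq, Or.inl (by rw [hδt, ht, step])⟩
  · refine ⟨4 * d - c₀, d' - 1 - q, by omega, by omega, by omega, Or.inr ?_⟩
    rw [neg_eq_iff_add_eq_zero, hδt, ht, step, ← Nat.cast_add]
    obtain ⟨s, rfl⟩ : ∃ s, d' = q + 1 + s := ⟨d' - 1 - q, by omega⟩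
    obtain ⟨u, hu⟩ : ∃ u, 4 * d = c₀ + u := ⟨4 * d - c₀, by omega⟩
    rw [show 4 * d - c₀ = u by omega, show q + 1 + s - 1 - q = s by omega]
    convert ZMod.natCast_self (2 * d * (2 * (q + 1 + s))) using 2
    linarith

end Steps

section Labels

/-- `reflect a r` is the matching with centre `a` built from the steps `c + 4dr` with `c` even
or `c = d`; `parity p c r` joins every `x ≡ p (mod 2)` to `x + step c r`. -/
inductive FactorLabel (d : ℕ)
  | reflect (a : ZMod (2 * d)) (r : ℕ)
  | parity (p : ZMod 2) (c r : ℕ)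

variable {d d' : ℕ}

namespace FactorLabel

def Valid (d' : ℕ) : FactorLabel d → Prop
  | reflect _ r => r < d'
  | parity _ c r => Odd c ∧ c < 2 * d ∧ c ≠ d ∧ r < d'

def shift (w : ZMod (2 * d * (2 * d'))) : FactorLabel d → FactorLabel d
  | reflect a r => reflect (a + residue w) r
  | parity p c r => parity (p + parityHom d d' w) c r

theorem valid_shift (w : ZMod (2 * d * (2 * d'))) {i : FactorLabel d} (hi : i.Valid d') :
    (i.shift w).Valid d' := by
  cases i <;> exact hi

end FactorLabel

open FactorLabel

/-- The factor containing the edge `{x, x + step c r}`. -/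
def labelOf (x : ZMod (2 * d * (2 * d'))) (c r : ℕ) : FactorLabel d :=
  if Even c then reflect (residue x + (c / 2 : ℕ)) r
  else if c = d then reflect (residue x) r
  else parity (parityHom d d' x) c r

theorem labelOf_of_even {c : ℕ} (hc : Even c) (x : ZMod (2 * d * (2 * d'))) (r : ℕ) :
    labelOf x c r = reflect (residue x + ((c / 2 : ℕ) : ZMod (2 * d))) r := by
  rw [labelOf, if_pos hc]

theorem labelOf_self (hd : Odd d) (x : ZMod (2 * d * (2 * d'))) (r : ℕ) :
    labelOf x d r = reflect (residue x) r := by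
  rw [labelOf, if_neg (Nat.not_even_iff_odd.2 hd), if_pos rfl]

theorem labelOf_of_odd {c : ℕ} (hc : Odd c) (hcd : c ≠ d) (x : ZMod (2 * d * (2 * d'))) (r : ℕ) :
    labelOf x c r = parity (parityHom d d' x) c r := by
  rw [labelOf, if_neg (Nat.not_even_iff_odd.2 hc), if_neg hcd]

/-- With `e = (a - residue x).val`: the residues `a - e` and `a + e` (`0 < e < d`) are joined by
the step with `c = 2e`, and the residues `a`, `a + d` by the step with `c = d`. -/
def reflectStep (r e : ℕ) : ZMod (2 * d * (2 * d')) :=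
  if e = 0 then step d r
  else if e < d then step (2 * e) r
  else if e = d then -step d r
  else -step (4 * d - 2 * e) r

theorem reflectStep_zero (r : ℕ) : (reflectStep r 0 : ZMod (2 * d * (2 * d'))) = step d r := by
  rw [reflectStep, if_pos rfl]

theorem reflectStep_of_pos_of_lt {r e : ℕ} (h0 : 0 < e) (he : e < d) :
    (reflectStep r e : ZMod (2 * d * (2 * d'))) = step (2 * e) r := by
  rw [reflectStep, if_neg h0.ne', if_pos he]

theorem reflectStep_self {r : ℕ} (hd : 0 < d) :
    (reflectStep r d : ZMod (2 * d * (2 * d'))) = -step d r := by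
  rw [reflectStep, if_neg hd.ne', if_neg (lt_irrefl d), if_pos rfl]

theorem reflectStep_of_lt {r e : ℕ} (he : d < e) :
    (reflectStep r e : ZMod (2 * d * (2 * d'))) = -step (4 * d - 2 * e) r := by
  rw [reflectStep, if_neg (by omega), if_neg (by omega), if_neg (by omega)]

/-- The partner of `x` in the factor `i` is `x + offset i x`. -/
def offset : FactorLabel d → ZMod (2 * d * (2 * d')) → ZMod (2 * d * (2 * d'))
  | reflect a r, x => reflectStep r (a - residue x).val
  | parity p c r, x => if parityHom d d' x = p then step c r else -step c r

theorem offset_shift (w x : ZMod (2 * d * (2 * d'))) (i : FactorLabel d) :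
    offset (i.shift w) (w + x) = offset i x := by
  cases i with
  | reflect a r =>
    simp only [offset, shift, map_add, add_comm (residue w), add_sub_add_right_eq_sub]
  | parity p c r => simp only [offset, shift, map_add, add_comm _ (parityHom d d' w), add_right_inj]

theorem offset_labelOf (hd : Odd d) {c r : ℕ} (h0 : 0 < c) (hc : c < 2 * d) (hr : r < d')
    (x : ZMod (2 * d * (2 * d'))) :
    (labelOf x c r).Valid d' ∧ offset (labelOf x c r) x = step c r ∧
      offset (labelOf x c r) (x + step c r) = -step c r := by
  by_cases hev : Even c
  · obtain ⟨k, rfl⟩ := even_iff_two_dvd.1 hev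
    have hx : ∀ a : ZMod (2 * d), a + k - (a + (2 * k : ℕ)) = -k := by intro a; push_cast; ring
    rw [labelOf_of_even hev, Nat.mul_div_cancel_left k two_pos]
    refine ⟨hr, ?_, ?_⟩
    · rw [offset, add_sub_cancel_left, ZMod.val_natCast_of_lt (by omega),
        reflectStep_of_pos_of_lt (by omega) (by omega)]
    · rw [offset, map_add, residue_step, hx,
        ZMod.val_neg_natCast_of_pos_of_lt (by omega) (by omega), reflectStep_of_lt (by omega),
        show 4 * d - 2 * (2 * d - k) = 2 * k by omega]
  by_cases hcd : c = d
  · subst c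
    rw [labelOf_self hd]
    refine ⟨hr, ?_, ?_⟩
    · rw [offset, sub_self, ZMod.val_zero, reflectStep_zero]
    · rw [offset, map_add, residue_step, sub_add_cancel_left,
        ZMod.val_neg_natCast_of_pos_of_lt h0 hc, show 2 * d - d = d by omega, reflectStep_self h0]
  · have hodd : Odd c := Nat.not_even_iff_odd.1 hev
    rw [labelOf_of_odd hodd hcd]
    refine ⟨⟨hodd, hc, hcd, hr⟩, if_pos rfl, ?_⟩
    rw [offset, map_add, parityHom_step, (ZMod.natCast_eq_one_iff_odd).2 hodd, if_neg]
    simp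

end Labels

section Partner

variable {d d' : ℕ}

open FactorLabel

theorem exists_labelOf_eq (hd : Odd d) {i : FactorLabel d} (hi : i.Valid d')
    (x : ZMod (2 * d * (2 * d'))) :
    ∃ c r, 0 < c ∧ c < 2 * d ∧ r < d' ∧
      (offset i x = step c r ∧ labelOf x c r = i ∨
        offset i x = -step c r ∧ labelOf (x - step c r) c r = i) := by
  have : NeZero (2 * d) := ⟨by have := hd.pos; omega⟩
  cases i with
  | reflect a r =>
    obtain ⟨e, he, hea, ha⟩ : ∃ e, e < 2 * d ∧ (a - residue x).val = e ∧ a = residue x + e :=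
      ⟨_, ZMod.val_lt _, rfl, by rw [ZMod.natCast_zmod_val]; ring⟩
    have h2d : ((2 * d : ℕ) : ZMod (2 * d)) = 0 := ZMod.natCast_self _
    push_cast at h2d
    simp only [offset, hea]
    rcases Nat.lt_trichotomy e d with hlt | rfl | hgt
    · rcases Nat.eq_zero_or_pos e with rfl | hpos
      · refine ⟨d, r, hd.pos, by omega, hi, Or.inl ⟨reflectStep_zero r, ?_⟩⟩
        rw [labelOf_self hd, ha, Nat.cast_zero, add_zero]
      · refine ⟨2 * e, r, by omega, by omega, hi, Or.inl ⟨reflectStep_of_pos_of_lt hpos hlt, ?_⟩⟩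
        rw [labelOf_of_even (even_two_mul e), Nat.mul_div_cancel_left e two_pos, ha]
    · refine ⟨e, r, hd.pos, by omega, hi, Or.inr ⟨reflectStep_self hd.pos, ?_⟩⟩
      rw [labelOf_self hd, ha, map_sub, residue_step]
      congr 1
      linear_combination -h2d
    · refine ⟨4 * d - 2 * e, r, by omega, by omega, hi, Or.inr ⟨reflectStep_of_lt hgt, ?_⟩⟩
      rw [labelOf_of_even ⟨2 * d - e, by omega⟩, ha, map_sub, residue_step,
        show (4 * d - 2 * e) / 2 = 2 * d - e by omega, Nat.cast_sub he.le, Nat.cast_sub (by omega)]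
      push_cast
      congr 1
      linear_combination -h2d
  | parity p c r =>
    obtain ⟨hodd, hc, hcd, hr⟩ := hi
    by_cases hp : parityHom d d' x = p
    · exact ⟨c, r, hodd.pos, hc, hr, Or.inl ⟨if_pos hp, by rw [labelOf_of_odd hodd hcd, hp]⟩⟩
    · refine ⟨c, r, hodd.pos, hc, hr, Or.inr ⟨if_neg hp, ?_⟩⟩
      have hflip : ∀ q p : ZMod 2, q ≠ p → q - 1 = p := by decide
      rw [labelOf_of_odd hodd hcd, map_sub, parityHom_step, (ZMod.natCast_eq_one_iff_odd).2 hodd,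
        hflip _ _ hp]

theorem residue_offset_ne_zero (hd : Odd d) {i : FactorLabel d} (hi : i.Valid d')
    (x : ZMod (2 * d * (2 * d'))) : residue (offset i x) ≠ 0 := by
  obtain ⟨c, r, h0, hc, -, ⟨h, -⟩ | ⟨h, -⟩⟩ := exists_labelOf_eq hd hi x <;>
    simpa [h, residue_step] using ZMod.natCast_ne_zero_of_pos_of_lt h0 hc

theorem offset_add_offset (hd : Odd d) {i : FactorLabel d} (hi : i.Valid d')
    (x : ZMod (2 * d * (2 * d'))) : offset i (x + offset i x) = -offset i x := by
  obtain ⟨c, r, h0, hc, hr, ⟨h, rfl⟩ | ⟨h, rfl⟩⟩ := exists_labelOf_eq hd hi x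
  · rw [h]
    exact (offset_labelOf hd h0 hc hr x).2.2
  · have := (offset_labelOf hd h0 hc hr (x - step c r)).2.1
    rwa [h, neg_neg, ← sub_eq_add_neg]

theorem exists_offset_eq (hd : Odd d) [NeZero d'] {δ : ZMod (2 * d * (2 * d'))}
    (hδ : residue δ ≠ 0) (x : ZMod (2 * d * (2 * d'))) :
    ∃ i : FactorLabel d, i.Valid d' ∧ offset i x = δ := by
  have : NeZero d := ⟨hd.pos.ne'⟩
  obtain ⟨c, r, h0, hc, hr, rfl | h⟩ := exists_step_of_residue_ne_zero hδ
  · exact ⟨_, (offset_labelOf hd h0 hc hr x).1, (offset_labelOf hd h0 hc hr x).2.1⟩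
  · obtain ⟨hvalid, -, hneg⟩ := offset_labelOf hd h0 hc hr (x + δ)
    rw [← h, add_neg_cancel_right, neg_neg] at hneg
    exact ⟨_, hvalid, hneg⟩

theorem offset_injective (hd : Odd d) {i j : FactorLabel d} (hi : i.Valid d') (hj : j.Valid d')
    (x : ZMod (2 * d * (2 * d'))) (h : offset i x = offset j x) : i = j := by
  obtain ⟨c, r, h0, hc, hr, ⟨hi', rfl⟩ | ⟨hi', rfl⟩⟩ := exists_labelOf_eq hd hi x <;>
  obtain ⟨c', r', h0', hc', hr', ⟨hj', rfl⟩ | ⟨hj', rfl⟩⟩ := exists_labelOf_eq hd hj x <;>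
  rw [hi', hj'] at h
  · obtain ⟨rfl, rfl⟩ := step_injective (by omega) hr (by omega) hr' h
    rfl
  · exact absurd (add_eq_zero_iff_eq_neg.2 h) (step_add_step_ne_zero h0 hc hc')
  · exact absurd (add_eq_zero_iff_eq_neg.2 h.symm) (step_add_step_ne_zero h0' hc' hc)
  · obtain ⟨rfl, rfl⟩ := step_injective (by omega) hr (by omega) hr' (neg_inj.1 h)
    rfl

theorem hasRegularOneFactorization_cyclicMultipartite (hd : Odd d) [NeZero d'] :
    HasRegularOneFactorization (cyclicMultipartite (2 * d) (2 * d'))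
      (Multiplicative (ZMod (2 * d * (2 * d')))) := by
  refine hasRegularOneFactorization_of_partner _ (MulAction.toPermHom _ _) (fun a u v => ?_)
    (fun u v => ⟨.ofAdd (v - u), ?_, fun b hb => ?_⟩) {i | i.Valid d'}
    (fun i x => x + offset i x) (fun a => shift a.toAdd)
    (fun i hi x => ?_) (fun i hi x => ?_) (fun u v huv => ?_)
    (fun i hi j hj x h => offset_injective hd hi hj x (add_left_cancel h))
    (fun a i hi => ⟨valid_shift _ hi, fun x => ?_⟩)
  · show residue (a.toAdd + u) ≠ residue (a.toAdd + v) ↔ residue u ≠ residue v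
    simp only [map_add, ne_eq, add_right_inj]
  · show v - u + u = v
    abel
  · change b.toAdd + u = v at hb
    rw [← hb, add_sub_cancel_right, ofAdd_toAdd]
  · simpa [cyclicMultipartite_adj] using residue_offset_ne_zero hd hi x
  · simp only [offset_add_offset hd hi x, add_neg_cancel_right]
  · obtain ⟨i, hi, h⟩ := exists_offset_eq hd (δ := v - u) (by
      rwa [map_sub, sub_ne_zero, ne_comm]) u
    exact ⟨i, hi, by rw [h, add_sub_cancel]⟩
  · show a.toAdd + x + offset (shift a.toAdd i) (a.toAdd + x) = a.toAdd + (x + offset i x)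
    rw [offset_shift, add_assoc]

end Partner

/-- If `m = 2d` and `n = 2d'` with `d, d'` odd, there exists a cyclic 1-factorization
of `K_{m×n}`. -/
theorem cyclic_oneFactorization_of_two_mul_odd (d d' : ℕ) (hd : Odd d) (hd' : Odd d') :
    HasRegularOneFactorization (completeMultipartite (2 * d) (2 * d'))
      (Multiplicative (ZMod ((2 * d) * (2 * d')))) := by
  have : NeZero d := ⟨hd.pos.ne'⟩
  have : NeZero d' := ⟨hd'.pos.ne'⟩
  exact (hasRegularOneFactorization_cyclicMultipartite hd).of_iso (cyclicMultipartiteIso _ _)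
end

section
/- If m ≡ 3 (mod 4) and d is odd, then there is no 1-factorization of the complete multipartite graph K_{m×2d} admitting an abelian group of automorphisms acting sharply transitively on the vertex set. -/
open SimpleGraph

/-!
Since `A` acts regularly and commutes with itself, the elements fixing one part fix every part and
form a subgroup of order `2d`, which contains an involution `s`. As `⟨s⟩` has odd index `k = md`,
`a ^ k ∈ ⟨s⟩ = {1, s}` for every `a`; identifying vertices with group elements, `σ = φ s` exchanges
the set `S` of vertices `a` with `a ^ k ≠ 1` and its complement, so `|S| = k` is odd.

For a 1-factor `M` let `c(M)` be the number of its edges leaving `S`. As `|S|` is odd, `c(M)` is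
odd; if `σ` fixed `M`, then `x ↦ σ (partner x)` would be a fixed-point-free involution on the
endpoints in `S` of those edges, making `c(M)` even. So `σ` pairs off the factors, with
`c(σ M) = c(M)`, and `∑ c(M) ≡ |F| (mod 4)`. But double counting gives
`∑ c(M) = md · (m - 1)d ≡ 2`, while `|F| = 2(m - 1)d ≡ 0 (mod 4)`.
-/

open Finset

theorem Finset.even_card_of_involution_s12 {α : Type*} {s : Finset α} (g : α → α)
    (hg_mem : ∀ a ∈ s, g a ∈ s) (hg_inv : ∀ a ∈ s, g (g a) = a) (hg_ne : ∀ a ∈ s, g a ≠ a) :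
    Even #s := by
  rw [← ZMod.natCast_eq_zero_iff_even, card_eq_sum_ones, Nat.cast_sum, Nat.cast_one]
  exact sum_involution (fun a _ => g a) (fun _ _ => by decide) (fun a ha _ => hg_ne a ha)
    hg_mem hg_inv

theorem Finset.natCast_sum_eq_card_of_involution {ι : Type*} {s : Finset ι} {f : ι → ℕ}
    (g : ι → ι) (hg_mem : ∀ a ∈ s, g a ∈ s) (hg_inv : ∀ a ∈ s, g (g a) = a)
    (hg_ne : ∀ a ∈ s, g a ≠ a) (hfg : ∀ a ∈ s, f (g a) = f a) (hf : ∀ a ∈ s, Odd (f a)) :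
    (∑ a ∈ s, f a : ZMod 4) = #s := by
  suffices ∑ a ∈ s, ((f a : ZMod 4) - 1) = 0 by
    rwa [sum_sub_distrib, sub_eq_zero, sum_const, nsmul_one] at this
  refine sum_involution (fun a _ => g a) (fun a ha => ?_) (fun a ha _ => hg_ne a ha) hg_mem hg_inv
  obtain ⟨j, hj⟩ := hf a ha
  calc ((f a : ZMod 4) - 1) + ((f (g a) : ZMod 4) - 1) = (4 : ZMod 4) * j := by
        rw [hfg a ha, hj]; push_cast; ring
    _ = 0 := by rw [show (4 : ZMod 4) = 0 by decide, zero_mul]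

theorem Finset.two_mul_card_filter_of_involution {α : Type*} {s : Finset α}
    {p : α → Prop} [DecidablePred p] {σ : α → α} (hσ : Function.Involutive σ)
    (hs : ∀ a ∈ s, σ a ∈ s) (hp : ∀ a, p (σ a) ↔ ¬p a) : 2 * #{a ∈ s | p a} = #s := by
  have hswap : #{a ∈ s | p a} = #{a ∈ s | ¬p a} :=
    card_nbij' σ σ (fun a ha => by simp_all) (fun a ha => by simp_all [← hp])
      (fun a _ => hσ a) (fun a _ => hσ a)
  rw [two_mul]
  nth_rewrite 2 [hswap]
  exact card_filter_add_card_filter_not p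

section OneFactor

variable {V : Type*} {Γ : SimpleGraph V} {M : Set (Sym2 V)}

-- `x` itself (a junk value) when no edge of `M` contains `x`.
open Classical in
noncomputable def partner (M : Set (Sym2 V)) (x : V) : V :=
  if h : ∃ y, s(x, y) ∈ M then h.choose else x

namespace IsOneFactor

theorem partner_eq (hM : IsOneFactor Γ M) {x y : V} (h : s(x, y) ∈ M) : partner M x = y := by
  have hex : ∃ z, s(x, z) ∈ M := ⟨y, h⟩
  obtain ⟨e, -, huniq⟩ := hM.2 x
  rw [partner, dif_pos hex]
  exact Sym2.congr_right.mp ((huniq _ ⟨hex.choose_spec, Sym2.mem_mk_left _ _⟩).trans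
    (huniq _ ⟨h, Sym2.mem_mk_left _ _⟩).symm)

theorem partner_mem (hM : IsOneFactor Γ M) (x : V) : s(x, partner M x) ∈ M := by
  obtain ⟨e, ⟨he, hx⟩, -⟩ := hM.2 x
  rw [← Sym2.other_spec hx] at he
  rwa [hM.partner_eq he]

theorem adj_partner (hM : IsOneFactor Γ M) (x : V) : Γ.Adj x (partner M x) :=
  hM.1 (hM.partner_mem x)

theorem partner_partner (hM : IsOneFactor Γ M) (x : V) : partner M (partner M x) = x :=
  hM.partner_eq (Sym2.eq_swap ▸ hM.partner_mem x)

theorem partner_image_map {σ : V → V} (hσ : Function.Involutive σ) (hM : IsOneFactor Γ M)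
    (hσM : IsOneFactor Γ (Sym2.map σ '' M)) (x : V) :
    partner (Sym2.map σ '' M) x = σ (partner M (σ x)) :=
  hσM.partner_eq ⟨s(σ x, partner M (σ x)), hM.partner_mem _, by rw [Sym2.map_mk, hσ x]⟩

end IsOneFactor

variable [DecidableEq V]

noncomputable def crossingCount (M : Set (Sym2 V)) (S : Finset V) : ℕ :=
  #{x ∈ S | partner M x ∉ S}

namespace IsOneFactor

variable {S : Finset V}

theorem odd_crossingCount (hM : IsOneFactor Γ M) (hS : Odd #S) : Odd (crossingCount M S) := by
  have hinside : Even #{x ∈ S | partner M x ∈ S} :=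
    even_card_of_involution_s12 (partner M) (fun x hx => by simp_all [hM.partner_partner])
      (fun x _ => hM.partner_partner x) (fun x _ h => (hM.adj_partner x).ne h.symm)
  have hsplit := card_filter_add_card_filter_not (s := S) (fun x => partner M x ∈ S)
  rw [← hsplit, Nat.odd_add'] at hS
  exact hS.2 hinside

variable {σ : V → V}

theorem crossingCount_image_map (hσ : Function.Involutive σ) (hσS : ∀ x, σ x ∈ S ↔ x ∉ S)
    (hM : IsOneFactor Γ M) (hσM : IsOneFactor Γ (Sym2.map σ '' M)) :
    crossingCount (Sym2.map σ '' M) S = crossingCount M S := by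
  refine card_nbij' (fun x => partner M (σ x)) (fun y => σ (partner M y)) ?_ ?_ ?_ ?_
  · intro x hx
    simp_all [hM.partner_image_map hσ hσM, hM.partner_partner]
  · intro y hy
    simp_all [hM.partner_image_map hσ hσM, hM.partner_partner, hσ _]
  · intro x _
    simp [hM.partner_partner, hσ x]
  · intro y _
    simp [hM.partner_partner, hσ _]

theorem even_crossingCount_of_image_map_eq (hσ : Function.Involutive σ)
    (hσS : ∀ x, σ x ∈ S ↔ x ∉ S) (hσadj : ∀ x, ¬Γ.Adj x (σ x)) (hM : IsOneFactor Γ M)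
    (hfix : Sym2.map σ '' M = M) : Even (crossingCount M S) := by
  have hcomm : ∀ z, partner M (σ z) = σ (partner M z) := fun z => by
    simpa [hfix, hσ z] using hM.partner_image_map hσ (by rwa [hfix]) (σ z)
  refine even_card_of_involution_s12 (fun x => σ (partner M x)) ?_ ?_ ?_
  · intro x hx
    simp_all [hM.partner_partner]
  · intro x _
    simp [hcomm, hM.partner_partner, hσ x]
  · intro x _ h
    exact hσadj _ (by rw [h]; exact (hM.adj_partner x).symm)

end IsOneFactor

end OneFactor

namespace IsOneFactorization

variable {V : Type*} [Fintype V] {Γ : SimpleGraph V} [DecidableRel Γ.Adj]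
  {F : Finset (Set (Sym2 V))}

theorem sum_partner (hF : IsOneFactorization Γ F) (x : V) {β : Type*} [AddCommMonoid β]
    (g : V → β) : ∑ M ∈ F, g (partner M x) = ∑ y ∈ Γ.neighborFinset x, g y := by
  refine sum_nbij (partner · x) (fun M hM => ?_) (fun M hM N hN h => ?_) (fun y hy => ?_)
    (fun _ _ => rfl)
  · exact (Γ.mem_neighborFinset _ _).2 ((hF.1 M hM).adj_partner x)
  · exact (hF.2 _ ((hF.1 M hM).adj_partner x)).unique ⟨hM, (hF.1 M hM).partner_mem x⟩
      ⟨hN, by rw [show partner M x = partner N x from h]; exact (hF.1 N hN).partner_mem x⟩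
  · obtain ⟨M, ⟨hM, hxy⟩, -⟩ := hF.2 s(x, y) ((Γ.mem_neighborFinset _ _).1 hy)
    exact ⟨M, hM, (hF.1 M hM).partner_eq hxy⟩

theorem card_eq_degree (hF : IsOneFactorization Γ F) (x : V) : #F = Γ.degree x := by
  rw [card_eq_sum_ones, ← card_neighborFinset_eq_degree, card_eq_sum_ones]
  exact hF.sum_partner x (fun _ => 1)

theorem sum_card_neighborFinset_filter_notMem [DecidableEq V] {σ : V → V}
    (hF : IsOneFactorization Γ F) (hσ : Function.Involutive σ) (hσF : ∀ M ∈ F, Sym2.map σ '' M ∈ F)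
    (hσadj : ∀ x, ¬Γ.Adj x (σ x)) {S : Finset V} (hσS : ∀ x, σ x ∈ S ↔ x ∉ S)
    (hS : Odd #S) : ((∑ x ∈ S, #{y ∈ Γ.neighborFinset x | y ∉ S} : ℕ) : ZMod 4) = #F := by
  have hfac : ∀ M ∈ F, IsOneFactor Γ M := fun M hM => hF.1 M hM
  have hdouble : ∑ x ∈ S, #{y ∈ Γ.neighborFinset x | y ∉ S} = ∑ M ∈ F, crossingCount M S := by
    simp only [crossingCount, card_filter]
    rw [sum_comm]
    exact sum_congr rfl fun x _ => (hF.sum_partner x _).symm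
  rw [hdouble, Nat.cast_sum]
  refine natCast_sum_eq_card_of_involution (Sym2.map σ '' ·) hσF (fun M _ => ?_)
    (fun M hM hfix => ?_) (fun M hM => ?_) (fun M hM => (hfac M hM).odd_crossingCount hS)
  · simp only [Set.image_image, Sym2.map_map, hσ.comp_self, id, Sym2.map_id', Set.image_id']
  · exact Nat.not_even_iff_odd.2 ((hfac M hM).odd_crossingCount hS)
      ((hfac M hM).even_crossingCount_of_image_map_eq hσ hσS hσadj hfix)
  · exact (hfac M hM).crossingCount_image_map hσ hσS (hfac _ (hσF M hM))

end IsOneFactorization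

section CompleteMultipartite

variable {m n : ℕ}

instance : DecidableRel (completeMultipartite m n).Adj :=
  fun u v => inferInstanceAs (Decidable (u.1 ≠ v.1))

theorem completeMultipartite_neighborFinset (x : Fin m × Fin n) :
    (completeMultipartite m n).neighborFinset x = ({y | y.1 ≠ x.1} : Finset (Fin m × Fin n)) := by
  ext y
  rw [mem_neighborFinset, mem_filter]
  exact ⟨fun h => ⟨mem_univ _, Ne.symm h⟩, fun h => Ne.symm h.2⟩

theorem completeMultipartite_degree (x : Fin m × Fin n) :
    (completeMultipartite m n).degree x = (m - 1) * n := by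
  have hprod : ({y | y.1 ≠ x.1} : Finset (Fin m × Fin n)) = (univ.erase x.1) ×ˢ univ := by
    ext y
    simp
  rw [← card_neighborFinset_eq_degree, completeMultipartite_neighborFinset, hprod, card_product,
    card_erase_of_mem (mem_univ _)]
  simp

theorem IsOneFactorization.modEq_four_of_completeMultipartite {d : ℕ}
    {F : Finset (Set (Sym2 (Fin m × Fin (2 * d))))}
    (hF : IsOneFactorization (completeMultipartite m (2 * d)) F)
    {σ : Fin m × Fin (2 * d) → Fin m × Fin (2 * d)} (hσ : Function.Involutive σ)
    (hσF : ∀ M ∈ F, Sym2.map σ '' M ∈ F) (hσpart : ∀ x, (σ x).1 = x.1)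
    {S : Finset (Fin m × Fin (2 * d))} (hσS : ∀ x, σ x ∈ S ↔ x ∉ S) (hmd : Odd (m * d)) :
    m * d * ((m - 1) * d) ≡ 2 * ((m - 1) * d) [MOD 4] := by
  have hS : #S = m * d := by
    have := two_mul_card_filter_of_involution (s := univ) (p := (· ∈ S)) hσ
      (fun _ _ => mem_univ _) hσS
    simp only [filter_mem_eq_inter, univ_inter, card_univ, Fintype.card_prod,
      Fintype.card_fin] at this
    linarith
  have hnbr : ∀ x, #{y ∈ (completeMultipartite m (2 * d)).neighborFinset x | y ∉ S} =
      (m - 1) * d := fun x => by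
    have := two_mul_card_filter_of_involution
      (s := (completeMultipartite m (2 * d)).neighborFinset x) (p := (· ∉ S)) hσ
      (fun y hy => by simpa [completeMultipartite_neighborFinset, hσpart] using hy)
      (fun y => not_congr (hσS y))
    rw [card_neighborFinset_eq_degree, completeMultipartite_degree] at this
    linarith
  obtain ⟨hm, hd⟩ := Nat.odd_mul.1 hmd
  have hcount := hF.sum_card_neighborFinset_filter_notMem hσ hσF
    (fun x h => h (hσpart x).symm) hσS (hS ▸ hmd)
  rw [sum_congr rfl fun x _ => hnbr x, sum_const, smul_eq_mul, hS,
    hF.card_eq_degree (⟨0, hm.pos⟩, ⟨0, by linarith [hd.pos]⟩), completeMultipartite_degree,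
    ZMod.natCast_eq_natCast_iff] at hcount
  convert hcount using 1
  ring

end CompleteMultipartite

section RegularAction

variable {A V : Type*}

theorem pow_eq_one_or_eq_of_card_eq [CommGroup A] {k : ℕ} (hcard : Nat.card A = 2 * k)
    {s : A} (hs : orderOf s = 2) (a : A) : a ^ k = 1 ∨ a ^ k = s := by
  classical
  have hindex : (Subgroup.zpowers s).index = k := by
    have := (Subgroup.zpowers s).index_mul_card
    rw [Nat.card_zpowers, hs, hcard] at this
    omega
  have hmem := (Subgroup.zpowers s).pow_index_mem a
  rw [hindex, (orderOf_pos_iff.1 (hs ▸ two_pos)).mem_zpowers_iff_mem_range_orderOf, hs] at hmem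
  obtain ⟨i, hi, hsi⟩ : ∃ i ≤ 1, s ^ i = a ^ k := by simpa using hmem
  interval_cases i <;> simp [← hsi]

theorem mul_pow_eq_one_iff_of_card_eq [CommGroup A] {k : ℕ} (hcard : Nat.card A = 2 * k)
    (hk : Odd k) {s : A} (hs : orderOf s = 2) (a : A) : (s * a) ^ k = 1 ↔ a ^ k ≠ 1 := by
  obtain ⟨hs2, hs1⟩ := orderOf_eq_prime_iff.1 hs
  have hsk : s ^ k = s := by
    obtain ⟨j, rfl⟩ := hk
    rw [pow_succ, pow_mul, hs2, one_pow, one_mul]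
  rw [mul_pow, hsk]
  rcases pow_eq_one_or_eq_of_card_eq hcard hs a with h | h <;> rw [h]
  · simp [hs1]
  · simp [hs1, ← sq, hs2]

variable [CommGroup A] {φ : A →* Equiv.Perm V} (hreg : ∀ u v, ∃! a, φ a u = v)
include hreg

noncomputable def orbitEquiv (v₀ : V) : A ≃ V :=
  Equiv.ofBijective (φ · v₀) ⟨fun _ _ h => (hreg v₀ _).unique h rfl, fun v => (hreg v₀ v).exists⟩

theorem orbitEquiv_mul (v₀ : V) (a b : A) :
    orbitEquiv hreg v₀ (a * b) = φ a (orbitEquiv hreg v₀ b) := by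
  show φ (a * b) v₀ = φ a (φ b v₀)
  rw [map_mul, Equiv.Perm.mul_apply]

theorem exists_finset_map_mem_iff_notMem [Fintype V] (v₀ : V) {k : ℕ}
    (hcard : Nat.card A = 2 * k) (hk : Odd k) {s : A} (hs : orderOf s = 2) :
    ∃ S : Finset V, ∀ x, φ s x ∈ S ↔ x ∉ S := by
  classical
  refine ⟨({x | (orbitEquiv hreg v₀).symm x ^ k ≠ 1} : Finset V), fun x => ?_⟩
  obtain ⟨a, rfl⟩ := (orbitEquiv hreg v₀).surjective x
  simp [← orbitEquiv_mul, mul_pow_eq_one_iff_of_card_eq hcard hk hs]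

end RegularAction

section PartPreserving

variable {A α β : Type*}

def fstPreserving [Group A] (φ : A →* Equiv.Perm (α × β)) : Subgroup A where
  carrier := {a | ∀ x, (φ a x).1 = x.1}
  mul_mem' {a b} ha hb x := by simp [Equiv.Perm.mul_apply, ha _, hb x]
  one_mem' x := by simp
  inv_mem' {a} ha x := by simpa using (ha (φ a⁻¹ x)).symm

variable [CommGroup A] {φ : A →* Equiv.Perm (α × β)} (hreg : ∀ u v, ∃! a, φ a u = v)
  (hφ : ∀ a u w, (φ a u).1 = (φ a w).1 ↔ u.1 = w.1) (v₀ : α × β)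
include hreg hφ v₀

theorem mem_fstPreserving_iff {a : A} : a ∈ fstPreserving φ ↔ (φ a v₀).1 = v₀.1 := by
  refine ⟨fun ha => ha v₀, fun ha x => ?_⟩
  obtain ⟨b, rfl⟩ := (hreg v₀ x).exists
  rw [← Equiv.Perm.mul_apply, ← map_mul, mul_comm, map_mul, Equiv.Perm.mul_apply, hφ]
  exact ha

theorem card_fstPreserving : Nat.card (fstPreserving φ) = Nat.card β := by
  refine Nat.card_congr ((Equiv.subtypeEquiv (q := fun x => x.1 = v₀.1) (orbitEquiv hreg v₀)
    fun a => mem_fstPreserving_iff hreg hφ v₀).trans ?_)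
  exact { toFun := fun x => x.1.2
          invFun := fun b => ⟨(v₀.1, b), rfl⟩
          left_inv := fun x => Subtype.ext (Prod.ext x.2.symm rfl)
          right_inv := fun _ => rfl }

theorem exists_orderOf_eq_two_mem_fstPreserving [Finite β] (hβ : Even (Nat.card β)) :
    ∃ s ∈ fstPreserving φ, orderOf s = 2 := by
  have hcard := card_fstPreserving hreg hφ v₀
  have : Nonempty β := ⟨v₀.2⟩
  have : Finite (fstPreserving φ) := Nat.finite_of_card_ne_zero (hcard ▸ Nat.card_pos.ne')
  obtain ⟨t, ht⟩ := exists_prime_orderOf_dvd_card' (G := fstPreserving φ) 2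
    (hcard ▸ even_iff_two_dvd.1 hβ)
  exact ⟨t, t.2, by rwa [Subgroup.orderOf_coe]⟩

end PartPreserving

theorem not_modEq_four_of_mod_four_eq_three {m d : ℕ} (hm : m % 4 = 3) (hd : Odd d) :
    ¬m * d * ((m - 1) * d) ≡ 2 * ((m - 1) * d) [MOD 4] := by
  obtain ⟨j, rfl⟩ : ∃ j, m = 4 * j + 3 := ⟨m / 4, by omega⟩
  obtain ⟨i, rfl⟩ := hd
  rw [show 4 * j + 3 - 1 = 4 * j + 2 by omega, ← ZMod.natCast_eq_natCast_iff]
  push_cast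
  generalize (j : ZMod 4) = x
  generalize (i : ZMod 4) = y
  revert x y
  decide

/-- If `m ≡ 3 (mod 4)` and `d` is odd, there is no 1-factorization of `K_{m×2d}` with an
abelian group acting sharply transitively on the vertices. -/
theorem no_abelian_oneFactorization_three_mod_four (m d : ℕ)
    (hm : m % 4 = 3) (hd : Odd d) :
    ∀ (A : Type) [CommGroup A],
      ¬ HasRegularOneFactorization (completeMultipartite m (2 * d)) A := by
  rintro A _ ⟨φ, F, hF, hadj, hmap, hreg⟩
  have hpart : ∀ a u w, (φ a u).1 = (φ a w).1 ↔ u.1 = w.1 :=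
    fun a u w => not_iff_not.1 (hadj a u w)
  let v₀ : Fin m × Fin (2 * d) := (⟨0, by omega⟩, ⟨0, by linarith [hd.pos]⟩)
  have hmd : Odd (m * d) := (Nat.odd_iff.2 (by omega)).mul hd
  have hcard : Nat.card A = 2 * (m * d) := by
    rw [Nat.card_congr (orbitEquiv hreg v₀), Nat.card_eq_fintype_card, Fintype.card_prod,
      Fintype.card_fin, Fintype.card_fin]
    ring
  obtain ⟨s, hsfst, hs⟩ := exists_orderOf_eq_two_mem_fstPreserving hreg hpart v₀ (by simp)
  obtain ⟨S, hS⟩ := exists_finset_map_mem_iff_notMem hreg v₀ hcard hmd hs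
  have hσ : Function.Involutive (φ s) := fun x => by
    rw [← Equiv.Perm.mul_apply, ← map_mul, ← sq, (orderOf_eq_prime_iff.1 hs).1, map_one]
    rfl
  refine not_modEq_four_of_mod_four_eq_three hm hd
    (IsOneFactorization.modEq_four_of_completeMultipartite (F := (Set.toFinite F).toFinset)
      (by simpa using hF) hσ (by simpa using hmap s) hsfst hS hmd)
end

section
/- If the complete multipartite graph K_{m×n} admits a 1-factorization with the cyclic group Z_{mn} as an automorphism group acting sharply transitively on the vertex set, then the complete multipartite graph K_{m×2n} admits a 1-factorization with the abelian group Z_{mn} × Z_2 as an automorphism group acting sharply transitively on the vertex set. -/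
open SimpleGraph

/-!
`K_{m×2n}` is the graph on `K_{m×n} × Z_2` in which adjacency only sees the first coordinate.
A 1-factor `M` of `K_{m×n}` and a label `c ∈ Z_2` give the 1-factor of `K_{m×2n}` made of the
edges `(u, i)(v, j)` with `uv ∈ M` and `i + j = c`, and these lifts form a 1-factorization.
The product of the given action with translation of the labels is sharply transitive and permutes
the lifts, a translation by `t` moving the label `c` to `c + 2t`. Nothing here is special to `Z_2`:
any additive commutative group of labels works.
-/

section Sym2

variable {α β : Type*}

lemma Sym2.map_surjective {f : α → β} (hf : Function.Surjective f) :
    Function.Surjective (Sym2.map f) := by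
  refine Sym2.ind fun x y => ?_
  obtain ⟨a, rfl⟩ := hf x
  obtain ⟨b, rfl⟩ := hf y
  exact ⟨s(a, b), rfl⟩

lemma Sym2.image_map_equiv (e : α ≃ β) (s : Set (Sym2 α)) :
    Sym2.map e '' s = Sym2.map e.symm ⁻¹' s :=
  congrFun (Set.image_eq_preimage_of_inverse (fun z => by simp [Sym2.map_map])
    (fun z => by simp [Sym2.map_map])) s

end Sym2

lemma Function.Injective.existsUnique_mem_image {α β : Type*} {f : α → β}
    (hf : Function.Injective f) {s : Set α} {p : β → Prop} :
    (∃! b, b ∈ f '' s ∧ p b) ↔ ∃! a, a ∈ s ∧ p (f a) := by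
  constructor
  · rintro ⟨_, ⟨⟨a, ha, rfl⟩, hp⟩, huniq⟩
    exact ⟨a, ⟨ha, hp⟩, fun a' h' => hf (huniq _ ⟨Set.mem_image_of_mem f h'.1, h'.2⟩)⟩
  · rintro ⟨a, ⟨ha, hp⟩, huniq⟩
    refine ⟨f a, ⟨Set.mem_image_of_mem f ha, hp⟩, ?_⟩
    rintro _ ⟨⟨a', ha', rfl⟩, hp'⟩
    rw [huniq a' ⟨ha', hp'⟩]

section OneFactor

variable {V W : Type*} {Γ : SimpleGraph V}

lemma isOneFactor_iff {M : Set (Sym2 V)} :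
    IsOneFactor Γ M ↔ M ⊆ Γ.edgeSet ∧ ∀ v, ∃! u, s(v, u) ∈ M := by
  refine and_congr_right' (forall_congr' fun v => ?_)
  constructor
  · rintro ⟨e, ⟨he, hv⟩, huniq⟩
    obtain ⟨u, rfl⟩ := Sym2.mem_iff_exists.1 hv
    exact ⟨u, he, fun u' hu' => Sym2.congr_right.1 (huniq _ ⟨hu', Sym2.mem_mk_left _ _⟩)⟩
  · rintro ⟨u, hu, huniq⟩
    refine ⟨s(v, u), ⟨hu, Sym2.mem_mk_left _ _⟩, ?_⟩
    rintro e ⟨he, hv⟩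
    obtain ⟨u', rfl⟩ := Sym2.mem_iff_exists.1 hv
    rw [huniq u' he]

lemma isOneFactorization_iff {F : Set (Set (Sym2 V))} :
    IsOneFactorization Γ F ↔
      (∀ M ∈ F, IsOneFactor Γ M) ∧ ∀ u v, Γ.Adj u v → ∃! M, M ∈ F ∧ s(u, v) ∈ M :=
  and_congr_right' Sym2.forall

lemma IsOneFactor.comap_equiv (e : W ≃ V) {M : Set (Sym2 V)} (hM : IsOneFactor Γ M) :
    IsOneFactor (Γ.comap e) (Sym2.map e ⁻¹' M) := by
  rw [isOneFactor_iff] at hM ⊢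
  refine ⟨fun z hz => ?_, fun w => e.existsUnique_congr_right.2 (hM.2 (e w))⟩
  induction z using Sym2.ind with
  | _ x y => exact hM.1 hz

lemma IsOneFactorization.comap_equiv (e : W ≃ V) {F : Set (Set (Sym2 V))}
    (hF : IsOneFactorization Γ F) :
    IsOneFactorization (Γ.comap e) ((Sym2.map e ⁻¹' ·) '' F) := by
  rw [isOneFactorization_iff] at hF ⊢
  refine ⟨Set.forall_mem_image.2 fun M hM => (hF.1 M hM).comap_equiv e, fun x y hxy => ?_⟩
  exact (Set.preimage_injective.2 (Sym2.map_surjective e.surjective)).existsUnique_mem_image.2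
    (hF.2 _ _ hxy)

end OneFactor

section Transport

variable {V W : Type*} {Γ : SimpleGraph V} {A B : Type*} [Group A] [Group B]

lemma HasRegularOneFactorization.of_mulEquiv (σ : B ≃* A)
    (h : HasRegularOneFactorization Γ A) : HasRegularOneFactorization Γ B := by
  obtain ⟨φ, F, hF, hadj, hmap, hreg⟩ := h
  exact ⟨φ.comp σ.toMonoidHom, F, hF, fun b => hadj (σ b), fun b => hmap (σ b),
    fun u v => σ.toEquiv.existsUnique_congr_right.2 (hreg u v)⟩

lemma HasRegularOneFactorization.comap_equiv (e : W ≃ V)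
    (h : HasRegularOneFactorization Γ A) : HasRegularOneFactorization (Γ.comap e) A := by
  obtain ⟨φ, F, hF, hadj, hmap, hreg⟩ := h
  refine ⟨e.symm.permCongrHom.toMonoidHom.comp φ, _, hF.comap_equiv e, fun a u v => ?_, ?_,
    fun u v => ?_⟩
  · simpa [Equiv.permCongr_apply] using hadj a (e u) (e v)
  · rintro a _ ⟨M, hM, rfl⟩
    refine ⟨_, hmap a M hM, ?_⟩
    simp only [Sym2.image_map_equiv, Set.preimage_preimage, Sym2.map_map]
    congr! 3
    exact (e.apply_symm_apply _).symm
  · simpa [Equiv.permCongr_apply, e.symm_apply_eq] using hreg (e u) (e v)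

end Transport

section Doubling

variable {V : Type*} {Γ : SimpleGraph V} {C : Type*} [AddCommGroup C]

def labelSum : Sym2 (V × C) → C :=
  Sym2.lift ⟨fun x y => x.2 + y.2, fun _ _ => add_comm _ _⟩

/-- For `C = ZMod 2`, the label `c = 0` gives the two parallel copies of `M`
and `c = 1` the crossed ones. -/
def liftFactor (M : Set (Sym2 V)) (c : C) : Set (Sym2 (V × C)) :=
  Sym2.map Prod.fst ⁻¹' M ∩ labelSum ⁻¹' {c}

@[simp]
lemma mk_mem_liftFactor {M : Set (Sym2 V)} {c : C} {x y : V × C} :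
    s(x, y) ∈ liftFactor M c ↔ s(x.1, y.1) ∈ M ∧ x.2 + y.2 = c :=
  Iff.rfl

lemma isOneFactor_liftFactor {M : Set (Sym2 V)} (hM : IsOneFactor Γ M) (c : C) :
    IsOneFactor (Γ.comap Prod.fst) (liftFactor M c) := by
  rw [isOneFactor_iff] at hM ⊢
  refine ⟨fun z hz => ?_, fun ⟨v, i⟩ => ?_⟩
  · induction z using Sym2.ind with
    | _ x y => exact hM.1 hz.1
  · obtain ⟨u, hu, huniq⟩ := hM.2 v
    refine ⟨(u, c - i), ⟨hu, add_sub_cancel i c⟩, fun y hy => ?_⟩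
    exact Prod.ext (huniq _ hy.1) (eq_sub_of_add_eq' hy.2)

lemma isOneFactorization_liftFactor {F : Set (Set (Sym2 V))} (hF : IsOneFactorization Γ F) :
    IsOneFactorization (Γ.comap Prod.fst) (Set.image2 liftFactor F (Set.univ : Set C)) := by
  rw [isOneFactorization_iff] at hF ⊢
  refine ⟨?_, fun x y hxy => ?_⟩
  · rintro _ ⟨M, hM, c, -, rfl⟩
    exact isOneFactor_liftFactor (hF.1 M hM) c
  · obtain ⟨M, ⟨hM, hxyM⟩, huniq⟩ := hF.2 x.1 y.1 hxy
    refine ⟨liftFactor M (x.2 + y.2), ⟨Set.mem_image2_of_mem hM trivial, hxyM, rfl⟩, ?_⟩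
    rintro _ ⟨⟨M', hM', c, -, rfl⟩, hxyM', rfl⟩
    rw [huniq M' ⟨hM', hxyM'⟩]
    rfl

lemma image_liftFactor (σ : Equiv.Perm V) (t : C) (M : Set (Sym2 V)) (c : C) :
    Sym2.map (σ.prodCongr (Equiv.addRight t)) '' liftFactor M c =
      liftFactor (Sym2.map σ '' M) (c + t + t) := by
  rw [Sym2.image_map_equiv, Sym2.image_map_equiv]
  ext z
  induction z using Sym2.ind with
  | _ x y =>
    simp only [Set.mem_preimage, Sym2.map_mk, mk_mem_liftFactor, Equiv.prodCongr_symm,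
      Equiv.prodCongr_apply, Prod.map_fst, Prod.map_snd, Equiv.addRight_symm, Equiv.coe_addRight]
    refine and_congr_right fun _ => ?_
    rw [← sub_eq_iff_eq_add, ← sub_eq_iff_eq_add]
    abel_nf

def doubleAction {A : Type*} [Group A] (φ : A →* Equiv.Perm V) :
    A × Multiplicative C →* Equiv.Perm (V × C) where
  toFun g := (φ g.1).prodCongr (Equiv.addRight g.2.toAdd)
  map_one' := by ext <;> simp
  map_mul' g h := by
    ext x
    · simp
    · simp [add_assoc, add_comm g.2.toAdd]

theorem HasRegularOneFactorization.comap_fst {A : Type*} [Group A]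
    (h : HasRegularOneFactorization Γ A) :
    HasRegularOneFactorization (Γ.comap (Prod.fst : V × C → V)) (A × Multiplicative C) := by
  obtain ⟨φ, F, hF, hadj, hmap, hreg⟩ := h
  refine ⟨doubleAction φ, _, isOneFactorization_liftFactor hF, fun g x y => hadj g.1 x.1 y.1,
    ?_, ?_⟩
  · rintro ⟨a, t⟩ _ ⟨M, hM, c, -, rfl⟩
    exact ⟨_, hmap a M hM, _, trivial, (image_liftFactor _ _ _ _).symm⟩
  · rintro ⟨u, i⟩ ⟨v, j⟩
    obtain ⟨a, ha, huniq⟩ := hreg u v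
    refine ⟨(a, .ofAdd (j - i)), by simp [doubleAction, ha], ?_⟩
    rintro ⟨b, t⟩ hb
    simp only [doubleAction, MonoidHom.coe_mk, OneHom.coe_mk, Equiv.prodCongr_apply,
      Equiv.coe_addRight, Prod.map_apply, Prod.mk.injEq] at hb
    exact Prod.ext (huniq b hb.1) (by simp [← hb.2])

end Doubling

theorem doubling_oneFactorization_general (m n : ℕ)
    (h : HasRegularOneFactorization (completeMultipartite m n)
        (Multiplicative (ZMod (m * n)))) :
    HasRegularOneFactorization (completeMultipartite m (2 * n))
      (Multiplicative (ZMod (m * n) × ZMod 2)) := by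
  let layers : Fin (2 * n) ≃ Fin n × ZMod 2 :=
    finProdFinEquiv.symm.trans (Equiv.prodComm (Fin 2) (Fin n))
  let e : Fin m × Fin (2 * n) ≃ (Fin m × Fin n) × ZMod 2 :=
    ((Equiv.refl (Fin m)).prodCongr layers).trans (Equiv.prodAssoc _ _ _).symm
  have hgraph : completeMultipartite m (2 * n) =
      ((completeMultipartite m n).comap Prod.fst).comap e := by
    ext
    rfl
  rw [hgraph]
  exact (h.comap_fst.of_mulEquiv (MulEquiv.prodMultiplicative _ _)).comap_equiv e

/-- If `K_{m×n}` has a 1-factorization with `Z_{mn}` acting sharply transitively on the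
vertices, then `K_{m×2n}` has a 1-factorization with `Z_{mn} × Z_2` acting sharply
transitively on the vertices. -/
theorem doubling_oneFactorization (m n : ℕ) (hn : 2 ≤ n)
    (h : HasRegularOneFactorization (completeMultipartite m n)
        (Multiplicative (ZMod (m * n)))) :
    HasRegularOneFactorization (completeMultipartite m (2 * n))
      (Multiplicative (ZMod (m * n) × ZMod 2)) :=
  doubling_oneFactorization_general m n h
end
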